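/- arXiv:1105.5291 — 3 statements merged into one kernel-verified Lean document; each statement's English description precedes it below -/
import Mathlib

section
/- For every n ∈ ℕ, every polyomino with n unit squares that minimizes T among all polyominoes with n unit squares is a connected monotone polyomino whose perimeter is minimal among polyominoes with n unit squares; moreover, the standard polyominoes with n unit squares are among the minimizers of T. -/
/- Common framework: two-type Kawasaki dynamics on a finite box in ℤ². -/

abbrev Site := ℤ × ℤ
abbrev Cell := ℤ × ℤ

/-- Nearest-neighbour adjacency on ℤ². -/
def adjacent (x y : Site) : Prop := |x.1 - y.1| + |x.2 - y.2| = 1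

instance (x y : Site) : Decidable (adjacent x y) :=
  inferInstanceAs (Decidable (|x.1 - y.1| + |x.2 - y.2| = 1))

/-- The four nearest neighbours of a site. -/
def nbrs (x : Site) : Finset Site :=
  {(x.1 + 1, x.2), (x.1 - 1, x.2), (x.1, x.2 + 1), (x.1, x.2 - 1)}

/-- Internal boundary ∂⁻Λ of a finite set Λ ⊂ ℤ². -/
def intBdry (Λ : Finset Site) : Finset Site := Λ.filter (fun x => ¬ nbrs x ⊆ Λ)

/-- Λ⁻ = Λ ∖ ∂⁻Λ. -/
def inner1 (Λ : Finset Site) : Finset Site := Λ \ intBdry Λ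

/-- Λ⁻⁻ = Λ⁻ ∖ ∂⁻Λ⁻. -/
def inner2 (Λ : Finset Site) : Finset Site := inner1 Λ \ intBdry (inner1 Λ)

/-- A configuration on Λ: each site of Λ carries 0 (empty), 1 (type 1) or 2 (type 2);
sites outside Λ are empty. -/
structure Config (Λ : Finset Site) where
  val : Site → Fin 3
  zero_outside : ∀ x, x ∉ Λ → val x = 0

/-- Number of particles of type 1. -/
def numType1 {Λ : Finset Site} (η : Config Λ) : ℕ := (Λ.filter (fun x => η.val x = 1)).card

/-- Number of particles of type 2. -/
def numType2 {Λ : Finset Site} (η : Config Λ) : ℕ := (Λ.filter (fun x => η.val x = 2)).card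

/-- Number of active bonds: unordered n.n. pairs of sites of Λ⁻, one carrying a 1 and the
other a 2 (each such unordered pair is counted once, as the ordered pair (type1,type2)). -/
def numBonds {Λ : Finset Site} (η : Config Λ) : ℕ :=
  ((inner1 Λ ×ˢ inner1 Λ).filter
    (fun p => adjacent p.1 p.2 ∧ η.val p.1 = 1 ∧ η.val p.2 = 2)).card

/-- The Hamiltonian H(η) = −U·B(η) + Δ1·n1(η) + Δ2·n2(η). -/
noncomputable def energy (U Δ1 Δ2 : ℝ) {Λ : Finset Site} (η : Config Λ) : ℝ :=
  -U * numBonds η + Δ1 * numType1 η + Δ2 * numType2 η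

/-- Allowed moves of the Kawasaki dynamics: hopping inside Λ, creation and annihilation
at the internal boundary. -/
def Communicates {Λ : Finset Site} (η η' : Config Λ) : Prop :=
  (∃ x ∈ Λ, ∃ y ∈ Λ, adjacent x y ∧ η.val x = 0 ∧ η.val y ≠ 0 ∧
      η'.val = Function.update (Function.update η.val x (η.val y)) y 0) ∨
  (∃ x ∈ intBdry Λ, ∃ v : Fin 3, v ≠ 0 ∧ η.val x = 0 ∧
      η'.val = Function.update η.val x v) ∨
  (∃ x ∈ intBdry Λ, η.val x ≠ 0 ∧ η'.val = Function.update η.val x 0)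

/-- ω is a path of allowed moves from η to η′. -/
def IsPath {Λ : Finset Site} (ω : List (Config Λ)) (η η' : Config Λ) : Prop :=
  ω.head? = some η ∧ ω.getLast? = some η' ∧ ω.Chain' Communicates

/-- Communication height between two sets of configurations:
Φ(A,B) = min over paths from A to B of the maximal energy along the path. -/
noncomputable def commHeightSet (U Δ1 Δ2 : ℝ) {Λ : Finset Site}
    (A B : Set (Config Λ)) : ℝ :=
  sInf {m : ℝ | ∃ η ∈ A, ∃ η' ∈ B, ∃ ω : List (Config Λ),
    IsPath ω η η' ∧ ∀ ξ ∈ ω, energy U Δ1 Δ2 ξ ≤ m}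

/-- Communication height Φ(η,η′). -/
noncomputable def commHeight (U Δ1 Δ2 : ℝ) {Λ : Finset Site} (η η' : Config Λ) : ℝ :=
  commHeightSet U Δ1 Δ2 {η} {η'}

/-- Stability level V_η = Φ(η, I_η) − H(η), where I_η = {ξ : H(ξ) < H(η)}. -/
noncomputable def stabLevel (U Δ1 Δ2 : ℝ) {Λ : Finset Site} (η : Config Λ) : ℝ :=
  commHeightSet U Δ1 Δ2 {η} {ξ : Config Λ | energy U Δ1 Δ2 ξ < energy U Δ1 Δ2 η}
    - energy U Δ1 Δ2 η

/-- The set of stable configurations (global minimizers of H). -/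
def Xstab (U Δ1 Δ2 : ℝ) (Λ : Finset Site) : Set (Config Λ) :=
  {η | ∀ ξ : Config Λ, energy U Δ1 Δ2 η ≤ energy U Δ1 Δ2 ξ}

/-- The set of metastable configurations (non-stable configurations of maximal
stability level). -/
def Xmeta (U Δ1 Δ2 : ℝ) (Λ : Finset Site) : Set (Config Λ) :=
  {η | η ∉ Xstab U Δ1 Δ2 Λ ∧
    ∀ ξ : Config Λ, ξ ∉ Xstab U Δ1 Δ2 Λ → stabLevel U Δ1 Δ2 ξ ≤ stabLevel U Δ1 Δ2 η}

/-- The empty configuration □. -/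
def emptyConfig (Λ : Finset Site) : Config Λ := ⟨fun _ => 0, fun _ _ => rfl⟩

/-- The critical length ℓ* = ⌈Δ1/(4U − Δ1 − Δ2)⌉. -/
noncomputable def lstar (U Δ1 Δ2 : ℝ) : ℤ := ⌈Δ1 / (4 * U - Δ1 - Δ2)⌉

/-- The box Λ: in dual coordinates u(x) = ((x1−x2)/2,(x1+x2)/2) the
(L+3/2)×(L+3/2) square centered at the origin, i.e. |x1−x2| ≤ L+1 and |x1+x2| ≤ L+1. -/
noncomputable def latBox (L : ℕ) : Finset Site :=
  (Finset.Icc (-(L : ℤ) - 1) ((L : ℤ) + 1) ×ˢ Finset.Icc (-(L : ℤ) - 1) ((L : ℤ) + 1)).filter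
    (fun x => |x.1 - x.2| ≤ (L : ℤ) + 1 ∧ |x.1 + x.2| ≤ (L : ℤ) + 1)

/-- The m×n dual rectangle of sites (in dual coordinates) with dual lower-left corner p
(in standard coordinates): sites p + i·(1,−1) + j·(1,1) for 0 ≤ i < m, 0 ≤ j < n.
All these sites have the same parity. -/
def dualRect (p : Site) (m n : ℕ) : Finset Site :=
  (Finset.range m ×ˢ Finset.range n).image
    (fun ij => ((p.1 + (ij.1 : ℤ) + (ij.2 : ℤ), p.2 + (ij.2 : ℤ) - (ij.1 : ℤ)) : Site))

/-- The sites adjacent to a set S but not in S. -/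
def siteBorder (S : Finset Site) : Finset Site := S.biUnion nbrs \ S

/-- ⊞: the tb-tiled configurations whose particles of type 2 occupy an L×L square in dual
coordinates filling Λ⁻ (type-2 sites in Λ⁻⁻, surrounding type-1 sites in Λ⁻); these are
the two largest checkerboard droplets (one of each parity). -/
def boxPlus (L : ℕ) : Set (Config (latBox L)) :=
  {η | ∃ p : Site,
      (∀ x, η.val x = 2 ↔ x ∈ dualRect p L L) ∧
      (∀ x, η.val x = 1 ↔ x ∈ siteBorder (dualRect p L L)) ∧
      dualRect p L L ⊆ inner2 (latBox L) ∧
      siteBorder (dualRect p L L) ⊆ inner1 (latBox L)}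

/-- The active-bond relation between sites. -/
def bondRel {Λ : Finset Site} (η : Config Λ) (x y : Site) : Prop :=
  x ∈ inner1 Λ ∧ y ∈ inner1 Λ ∧ adjacent x y ∧
  ((η.val x = 1 ∧ η.val y = 2) ∨ (η.val x = 2 ∧ η.val y = 1))

/-- C is a cluster of η: a maximal connected component of the occupied sites under the
active-bond relation. -/
def IsCluster {Λ : Finset Site} (η : Config Λ) (C : Finset Site) : Prop :=
  ∃ x : Site, η.val x ≠ 0 ∧ ∀ y : Site, y ∈ C ↔ Relation.ReflTransGen (bondRel η) x y

/-- The occupied sites of η form a single cluster. -/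
def SingleCluster {Λ : Finset Site} (η : Config Λ) : Prop :=
  ∃ x : Site, η.val x ≠ 0 ∧
    ∀ y : Site, η.val y ≠ 0 → Relation.ReflTransGen (bondRel η) x y

/-- Dual coordinates, renormalized to land in ℤ² (within a fixed parity class this maps
dual neighbours to adjacent cells). -/
def cellOf (x : Site) : Cell := ((x.1 - x.2).fdiv 2, (x.1 + x.2).fdiv 2)

/-- The sites of Λ occupied by particles of type 2. -/
def type2Sites {Λ : Finset Site} (η : Config Λ) : Finset Site :=
  Λ.filter (fun x => η.val x = 2)

/-- Tile support of a configuration: the polyomino in dual coordinates given by the unit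
squares centered at the particles of type 2. -/
def tileSupport {Λ : Finset Site} (η : Config Λ) : Finset Cell :=
  (type2Sites η).image cellOf

/- ----------  Polyominoes ---------- -/

/-- Perimeter of a polyomino (number of boundary edges, inner boundaries included). -/
def perim (A : Finset Cell) : ℕ :=
  A.sum (fun c => ((nbrs c).filter (fun d => d ∉ A)).card)

def adjIn (A : Finset Cell) (x y : Cell) : Prop := x ∈ A ∧ y ∈ A ∧ adjacent x y

/-- Connectedness of a polyomino. -/
def PolyConnected (A : Finset Cell) : Prop :=
  A.Nonempty ∧ ∀ x ∈ A, ∀ y ∈ A, Relation.ReflTransGen (adjIn A) x y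

/-- Number of holes: bounded (= finite) connected components of the complement. -/
noncomputable def numHoles (A : Finset Cell) : ℕ :=
  Set.ncard {C : Set Cell | ∃ d : Cell, d ∉ A ∧
    C = {e : Cell | Relation.ReflTransGen (fun u v => adjacent u v ∧ u ∉ A ∧ v ∉ A) d e} ∧
    C.Finite}

/-- The four cells having lattice point v as a corner. -/
def cellsAt (v : Cell) : Finset Cell :=
  {(v.1 - 1, v.2 - 1), (v.1 - 1, v.2), (v.1, v.2 - 1), v}

/-- The lattice points that are corners of cells of A. -/
def vertexSet (A : Finset Cell) : Finset Cell :=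
  A.biUnion (fun c => {c, (c.1 + 1, c.2), (c.1, c.2 + 1), (c.1 + 1, c.2 + 1)})

def occAt (A : Finset Cell) (v : Cell) : ℕ := ((cellsAt v).filter (fun c => c ∈ A)).card

/-- Number of convex corners ψ(A): vertices with exactly one incident occupied cell. -/
def convexCorners (A : Finset Cell) : ℕ :=
  (vertexSet A).sum (fun v => if occAt A v = 1 then 1 else 0)

/-- Number of concave corners φ(A): a vertex with three incident occupied cells counts
once, a vertex with two diagonally opposite occupied cells counts twice. -/
def concaveCorners (A : Finset Cell) : ℕ :=
  (vertexSet A).sum (fun v =>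
    if occAt A v = 3 then 1
    else if occAt A v = 2 ∧ (((v.1 - 1, v.2 - 1) ∈ A ∧ v ∈ A) ∨
          ((v.1 - 1, v.2) ∈ A ∧ (v.1, v.2 - 1) ∈ A)) then 2
    else 0)

/-- T(A) = 2P(A) + ψ(A) − φ(A). -/
def Tpoly (A : Finset Cell) : ℤ :=
  2 * (perim A : ℤ) + (convexCorners A : ℤ) - (concaveCorners A : ℤ)

/-- For connected polyominoes, T(A) = 2P(A) + 4 − 4Q(A). -/
noncomputable def Tconn (A : Finset Cell) : ℤ :=
  2 * (perim A : ℤ) + 4 - 4 * (numHoles A : ℤ)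

/-- Width (number of columns) of the circumscribing rectangle. -/
def polyWidth (A : Finset Cell) : ℤ :=
  (WithBot.unbotD 0 (A.image Prod.fst).max) - (WithTop.untopD 0 (A.image Prod.fst).min) + 1

/-- Height (number of rows) of the circumscribing rectangle. -/
def polyHeight (A : Finset Cell) : ℤ :=
  (WithBot.unbotD 0 (A.image Prod.snd).max) - (WithTop.untopD 0 (A.image Prod.snd).min) + 1

/-- A polyomino is monotone if its perimeter equals the perimeter of its circumscribing
rectangle. -/
def MonotonePoly (A : Finset Cell) : Prop :=
  (perim A : ℤ) = 2 * (polyWidth A + polyHeight A)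

/-- The reference standard polyomino: an (l+ζ)×l rectangle (quasi-square, ζ ∈ {0,1})
with a bar of length k attached to a longest side, starting at offset a. -/
def baseStd (l ζ a k : ℕ) : Finset Cell :=
  ((Finset.range (l + ζ)) ×ˢ (Finset.range l)).image
      (fun q => (((q.1 : ℤ), (q.2 : ℤ)) : Cell))
    ∪ (Finset.range k).image (fun i => ((((a + i : ℕ) : ℤ), (l : ℤ)) : Cell))

/-- The eight symmetries of the square lattice. -/
def dihedralMaps : List (Cell → Cell) :=
  [fun c => (c.1, c.2), fun c => (-c.1, c.2), fun c => (c.1, -c.2), fun c => (-c.1, -c.2),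
   fun c => (c.2, c.1), fun c => (-c.2, c.1), fun c => (c.2, -c.1), fun c => (-c.2, -c.1)]

/-- A standard polyomino: a quasi-square with possibly a bar attached to one of its
longest sides (up to lattice symmetries and translations). -/
def IsStandardPoly (A : Finset Cell) : Prop :=
  ∃ l ζ a k : ℕ, 1 ≤ l ∧ ζ ≤ 1 ∧ a + k ≤ l + ζ ∧
    ∃ f ∈ dihedralMaps, ∃ t : Cell,
      A = (baseStd l ζ a k).image (fun c => (((f c).1 + t.1, (f c).2 + t.2) : Cell))

/- ----------  tb-tiled configurations ---------- -/

/-- V_{*,k}: configurations with exactly k particles of type 2, all lying in Λ⁻⁻. -/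
def VStar (Λ : Finset Site) (k : ℕ) : Set (Config Λ) :=
  {η | numType2 η = k ∧ ∀ x, η.val x = 2 → x ∈ inner2 Λ}

/-- V_{*,k}^{4k}: configurations of V_{*,k} with exactly 4k active bonds and no isolated
particle of type 1 (the tb-tiled configurations with k particles of type 2). -/
def VTiled (Λ : Finset Site) (k : ℕ) : Set (Config Λ) :=
  {η | η ∈ VStar Λ k ∧ numBonds η = 4 * k ∧
    ∀ x, η.val x = 1 → ∃ y ∈ nbrs x, η.val y = 2}

/-- All particles of type 2 have the same (site) parity. -/
def SameParity2 {Λ : Finset Site} (η : Config Λ) : Prop :=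
  ∀ x y : Site, η.val x = 2 → η.val y = 2 → (x.1 + x.2) % 2 = (y.1 + y.2) % 2

/-- A standard configuration: tile support a standard polyomino (all type-2 particles of
one parity). -/
def IsStandardConfig {Λ : Finset Site} (η : Config Λ) : Prop :=
  SameParity2 η ∧ IsStandardPoly (tileSupport η)

/-- A tb-tiled configuration: at least one particle of type 2, every particle of type 2
saturated, no isolated particle of type 1. -/
def IsTbTiled {Λ : Finset Site} (η : Config Λ) : Prop :=
  (∃ x, η.val x = 2) ∧
  (∀ x, η.val x = 2 → ∀ y ∈ nbrs x, η.val y = 1) ∧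
  (∀ x, η.val x = 1 → ∃ y ∈ nbrs x, η.val y = 2)

/-- η is the tb-tiled droplet with type-2 sites S: type-2 exactly on S, type-1 exactly
on the border of S, empty elsewhere. -/
def IsTbDroplet {Λ : Finset Site} (η : Config Λ) (S : Finset Site) : Prop :=
  (∀ x, η.val x = 2 ↔ x ∈ S) ∧ (∀ x, η.val x = 1 ↔ x ∈ siteBorder S)

/- ----------  cluster-wise quantities ---------- -/

def numType1In {Λ : Finset Site} (η : Config Λ) (C : Finset Site) : ℕ :=
  (C.filter (fun x => η.val x = 1)).card

def numType2In {Λ : Finset Site} (η : Config Λ) (C : Finset Site) : ℕ :=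
  (C.filter (fun x => η.val x = 2)).card

def numBondsIn {Λ : Finset Site} (η : Config Λ) (C : Finset Site) : ℕ :=
  ((C ×ˢ C).filter (fun q => q.1 ∈ inner1 Λ ∧ q.2 ∈ inner1 Λ ∧ adjacent q.1 q.2 ∧
    η.val q.1 = 1 ∧ η.val q.2 = 2)).card

def tileSupportIn {Λ : Finset Site} (η : Config Λ) (C : Finset Site) : Finset Cell :=
  (C.filter (fun x => η.val x = 2)).image cellOf

/-- Number of active bonds incident to the site x. -/
def bondDeg {Λ : Finset Site} (η : Config Λ) (x : Site) : ℕ :=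
  ((nbrs x).filter (fun y => x ∈ inner1 Λ ∧ y ∈ inner1 Λ ∧
    ((η.val x = 1 ∧ η.val y = 2) ∨ (η.val x = 2 ∧ η.val y = 1)))).card

/-- Number of missing bonds of the type-1 particles of C. -/
def missingBonds {Λ : Finset Site} (η : Config Λ) (C : Finset Site) : ℤ :=
  ∑ x ∈ C.filter (fun x => η.val x = 1), (4 - (bondDeg η x : ℤ))

/- ----------  geometry for the energy-reduction mechanisms ---------- -/

/-- A site is lattice-connecting: there is a n.n. path of empty sites from it to ∂⁻Λ. -/
def LatticeConnecting {Λ : Finset Site} (η : Config Λ) (x : Site) : Prop :=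
  ∃ l : List Site, List.Chain adjacent x l ∧
    (x :: l).getLast (List.cons_ne_nil x l) ∈ intBdry Λ ∧
    ∀ y ∈ l, y ∈ Λ ∧ η.val y = 0

/-- A pending dimer (x,y): a lattice-connecting type-1 particle x whose unique active
bond is with the adjacent type-2 particle y, which has at most three active bonds. -/
def PendingDimer {Λ : Finset Site} (η : Config Λ) (x y : Site) : Prop :=
  bondRel η x y ∧ η.val x = 1 ∧ η.val y = 2 ∧ LatticeConnecting η x ∧
  bondDeg η x = 1 ∧ bondDeg η y ≤ 3

/-- The sites of a horizontal (in dual coordinates) beam of length l: l+1 particles of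
type 1 at mutual dual distance 1, with left-most site p. -/
def beamSites (p : Site) (l : ℕ) : Finset Site :=
  (Finset.range (l + 1)).image (fun i : ℕ => ((p.1 + (i : ℤ), p.2 - (i : ℤ)) : Site))

/-- The center row of the (south) support of the beam. -/
def centerSites (p : Site) (l : ℕ) : Finset Site :=
  (Finset.range l).image (fun i : ℕ => ((p.1 + (i : ℤ), p.2 - 1 - (i : ℤ)) : Site))

/-- The basement row of the (south) support of the beam. -/
def basementSites (p : Site) (l : ℕ) : Finset Site :=
  (Finset.range (l + 1)).image (fun i : ℕ => ((p.1 - 1 + (i : ℤ), p.2 - 1 - (i : ℤ)) : Site))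

/-- The (south) support of a beam/bridge. -/
def bridgeSupport (p : Site) (l : ℕ) : Finset Site :=
  beamSites p l ∪ centerSites p l ∪ basementSites p l

/-- The 12 sites of a slot: a 4×4 block minus its four corner sites; p is the lower-left
corner of the block. -/
def slotSites (p : Site) : Finset Site :=
  ((Finset.range 4 ×ˢ Finset.range 4).image
      (fun ij => ((p.1 + (ij.1 : ℤ), p.2 + (ij.2 : ℤ)) : Site))) \
    {(p.1, p.2), (p.1 + 3, p.2), (p.1, p.2 + 3), (p.1 + 3, p.2 + 3)}

/-- The slot-conjugate (diagonally opposite) ordered pairs of central sites of a slot. -/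
def slotDiagPairs (p : Site) : List (Site × Site) :=
  [((p.1 + 1, p.2 + 1), (p.1 + 2, p.2 + 2)), ((p.1 + 2, p.2 + 2), (p.1 + 1, p.2 + 1)),
   ((p.1 + 1, p.2 + 2), (p.1 + 2, p.2 + 1)), ((p.1 + 2, p.2 + 1), (p.1 + 1, p.2 + 2))]

/-- The type-2 sites of the bar added on side d (0 = north, 1 = south, 2 = east,
3 = west, in dual coordinates) of the m×n dual rectangle with corner p. -/
def sideBar (p : Site) (m n : ℕ) (d : Fin 4) : Finset Site :=
  if d = 0 then dualRect (p.1 + (n : ℤ), p.2 + (n : ℤ)) m 1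
  else if d = 1 then dualRect (p.1 - 1, p.2 - 1) m 1
  else if d = 2 then dualRect (p.1 + (m : ℤ), p.2 - (m : ℤ)) 1 n
  else dualRect (p.1 - 1, p.2 + 1) 1 n

/-- The length of side d of an m×n dual rectangle. -/
def sideLen (m n : ℕ) (d : Fin 4) : ℕ := if (d : ℕ) ≤ 1 then m else n

/-- The type-2 sites left after removing the outermost bar on side d of the m×n dual
rectangle with corner p. -/
def shrunkRect (p : Site) (m n : ℕ) (d : Fin 4) : Finset Site :=
  if d = 0 then dualRect p m (n - 1)
  else if d = 1 then dualRect (p.1 + 1, p.2 + 1) m (n - 1)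
  else if d = 2 then dualRect p (m - 1) n
  else dualRect (p.1 + 1, p.2 - 1) (m - 1) n


/-!
Counting, vertex by vertex, boundary edges, occupied cells and corners gives
`T(A) = 4 (|V(A)| - |A|)`, where `V(A)` is the set of lattice points that are corners of cells
of `A`. Thickening `A` one step up and then one step right produces `V(A)`; a thickening adds at
least one point per column (row), with equality exactly when the columns (rows) are intervals.
Hence `|V(A)| ≥ |A| + s + r + 1` for `s` columns and `r` rows, and since `|A| ≤ s r`, AM-GM
gives `T(A) ≥ 4 (⌈2√n⌉ + 1)`, a bound attained by the standard polyominoes. A minimizer is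
therefore row- and column-convex with `s + r = ⌈2√n⌉`. Minimality of `s + r` also rules out a
horizontal cut into two parts with disjoint columns, which makes the minimizer connected. Its
perimeter is then `2 (s + r)`, the perimeter of its circumscribing rectangle, while every
polyomino with `n` cells has perimeter at least `2 (s + r) ≥ 2 ⌈2√n⌉`.
-/

open scoped Pointwise

namespace Finset

variable {G : Type*} [AddGroup G] [DecidableEq G] (a : G) (A : Finset G)

lemma card_union_vadd :
    (A ∪ (a +ᵥ A)).card = A.card + ((a +ᵥ A) \ A).card := by
  rw [union_comm, ← card_sdiff_add_card, add_comm]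

lemma card_sdiff_vadd_comm :
    (A \ (a +ᵥ A)).card = ((a +ᵥ A) \ A).card :=
  card_sdiff_comm (card_vadd_finset a A).symm

lemma card_sdiff_neg_vadd :
    (A \ (-a +ᵥ A)).card = ((a +ᵥ A) \ A).card := by
  rw [← card_vadd_finset a, vadd_finset_sdiff, vadd_neg_vadd]

lemma card_filter_vadd_notMem :
    (A.filter (fun c => a +ᵥ c ∉ A)).card = ((a +ᵥ A) \ A).card := by
  rw [← card_sdiff_neg_vadd]
  congr 1
  ext c
  simp [mem_neg_vadd_finset_iff]

lemma card_neg_vadd_sdiff :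
    ((-a +ᵥ A) \ A).card = ((a +ᵥ A) \ A).card := by
  rw [← card_sdiff_vadd_comm, card_sdiff_neg_vadd]

end Finset

lemma Int.exists_and_not_succ_of_le {P : ℤ → Prop} {a b : ℤ} (ha : P a) (hb : ¬ P b)
    (hab : a ≤ b) :
    ∃ z, a ≤ z ∧ z < b ∧ P z ∧ ¬ P (z + 1) := by
  by_contra h
  push Not at h
  have hall : ∀ z, a ≤ z → z ≤ b → P z := by
    intro z hz
    induction z, hz using Int.leInduction with
    | base => exact fun _ => ha
    | succ z hz ih => exact fun hzb => h z hz (by omega) (ih (by omega))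
  exact hb (hall b hab le_rfl)

namespace Polyomino

local notation "e₁" => ((1, 0) : Cell)
local notation "e₂" => ((0, 1) : Cell)

lemma adjacent_iff {c d : Cell} : adjacent c d ↔
    d = (c.1 + 1, c.2) ∨ d = (c.1 - 1, c.2) ∨ d = (c.1, c.2 + 1) ∨ d = (c.1, c.2 - 1) := by
  rcases abs_cases (c.1 - d.1) with ⟨h1, h1'⟩ | ⟨h1, h1'⟩ <;>
  rcases abs_cases (c.2 - d.2) with ⟨h2, h2'⟩ | ⟨h2, h2'⟩ <;>
  simp only [adjacent, h1, h2, Prod.ext_iff] <;> omega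

lemma adjacent_comm {c d : Cell} : adjacent c d ↔ adjacent d c := by
  simp only [adjacent, abs_sub_comm]

lemma mem_nbrs {c d : Cell} : d ∈ nbrs c ↔ adjacent c d := by
  simp [nbrs, adjacent_iff]

lemma mem_cellsAt {c v : Cell} : c ∈ cellsAt v ↔
    v = c ∨ v = (c.1 + 1, c.2) ∨ v = (c.1, c.2 + 1) ∨ v = (c.1 + 1, c.2 + 1) := by
  simp only [cellsAt, Finset.mem_insert, Finset.mem_singleton, Prod.ext_iff]
  omega

def corners (c : Cell) : Finset Cell := {c, (c.1 + 1, c.2), (c.1, c.2 + 1), (c.1 + 1, c.2 + 1)}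

lemma mem_corners {c v : Cell} : v ∈ corners c ↔ c ∈ cellsAt v := by
  rw [mem_cellsAt]; simp [corners]

lemma card_corners (c : Cell) : (corners c).card = 4 := by
  rw [corners, Finset.card_insert_of_notMem, Finset.card_insert_of_notMem,
    Finset.card_insert_of_notMem, Finset.card_singleton] <;> simp [Prod.ext_iff]

lemma card_corners_filter_of_adjacent {c d : Cell} (h : adjacent c d) :
    ((corners c).filter (fun v => d ∈ cellsAt v)).card = 2 := by
  rw [adjacent_iff] at h
  simp only [Prod.ext_iff] at h
  rw [Finset.card_eq_two]
  refine ⟨(max c.1 d.1, max c.2 d.2), (min c.1 d.1 + 1, min c.2 d.2 + 1), ?_, ?_⟩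
  · simp only [ne_eq, Prod.ext_iff]; omega
  · ext v
    simp only [Finset.mem_filter, corners, mem_cellsAt, Finset.mem_insert,
      Finset.mem_singleton, Prod.ext_iff]
    omega

lemma mem_vertexSet {A : Finset Cell} {v : Cell} : v ∈ vertexSet A ↔ ∃ c ∈ A, c ∈ cellsAt v := by
  simp only [vertexSet, Finset.mem_biUnion, ← mem_corners, corners]

lemma mem_vertexSet_iff {A : Finset Cell} {x y : ℤ} : (x, y) ∈ vertexSet A ↔
    (x, y) ∈ A ∨ (x, y - 1) ∈ A ∨ (x - 1, y) ∈ A ∨ (x - 1, y - 1) ∈ A := by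
  simp only [mem_vertexSet, cellsAt, Finset.mem_insert, Finset.mem_singleton]
  constructor
  · rintro ⟨c, hc, rfl | rfl | rfl | rfl⟩ <;> simp_all
  · rintro (h | h | h | h) <;> exact ⟨_, h, by simp⟩

lemma sum_vertexSet_sum_cellsAt {M : Type*} [AddCommMonoid M] (A : Finset Cell)
    (f : Cell → Cell → M) :
    ∑ v ∈ vertexSet A, ∑ c ∈ (cellsAt v).filter (· ∈ A), f v c
      = ∑ c ∈ A, ∑ v ∈ corners c, f v c :=
  Finset.sum_comm' fun v c => by
    simp only [Finset.mem_filter, mem_vertexSet, mem_corners]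
    exact ⟨fun h => ⟨h.2.1, h.2.2⟩, fun h => ⟨⟨c, h.2, h.1⟩, h.1, h.2⟩⟩

lemma sum_occAt (A : Finset Cell) : ∑ v ∈ vertexSet A, occAt A v = 4 * A.card := by
  simp only [occAt, Finset.card_eq_sum_ones (Finset.filter _ _), sum_vertexSet_sum_cellsAt]
  simp [card_corners, mul_comm]

/-- The number of unit boundary edges of `A` ending at the vertex `v`: each is the common side of
an inner and an outer cell at `v`. -/
def boundaryEdgesAt (A : Finset Cell) (v : Cell) : ℕ :=
  ∑ c ∈ (cellsAt v).filter (· ∈ A), ((cellsAt v).filter (fun d => d ∉ A ∧ adjacent c d)).card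

lemma sum_boundaryEdgesAt (A : Finset Cell) :
    ∑ v ∈ vertexSet A, boundaryEdgesAt A v = 2 * perim A := by
  simp only [boundaryEdgesAt]
  rw [sum_vertexSet_sum_cellsAt, perim, Finset.mul_sum]
  refine Finset.sum_congr rfl fun c _ => ?_
  have hcount : ∀ v, ((cellsAt v).filter (fun d => d ∉ A ∧ adjacent c d)).card
      = ∑ d ∈ (nbrs c).filter (· ∉ A), if d ∈ cellsAt v then 1 else 0 := by
    intro v
    rw [← Finset.card_filter, Finset.filter_filter]
    congr 1
    ext d
    simp only [Finset.mem_filter, mem_nbrs]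
    tauto
  simp only [hcount]
  rw [Finset.sum_comm]
  simp only [← Finset.card_filter]
  rw [Finset.sum_congr rfl fun d hd =>
    card_corners_filter_of_adjacent (mem_nbrs.mp (Finset.mem_filter.mp hd).1)]
  simp [mul_comm]

lemma sum_cellsAt {M : Type*} [AddCommMonoid M] (v : Cell) (f : Cell → M) :
    ∑ c ∈ cellsAt v, f c
      = f (v.1 - 1, v.2 - 1) + f (v.1 - 1, v.2) + f (v.1, v.2 - 1) + f v := by
  rw [cellsAt, Finset.sum_insert (by simp [Prod.ext_iff]),
    Finset.sum_insert (by simp [Prod.ext_iff]),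
    Finset.sum_insert (by simp [Prod.ext_iff]), Finset.sum_singleton]
  simp only [add_assoc]

/-- The local form of `2P + 4|A| + ψ = 4|V| + φ`, checked on the 16 occupation patterns of
the four cells at a vertex. -/
lemma boundaryEdgesAt_add_occAt (A : Finset Cell) {v : Cell} (hv : v ∈ vertexSet A) :
    boundaryEdgesAt A v + occAt A v + (if occAt A v = 1 then 1 else 0)
      = 4 + (if occAt A v = 3 then 1
        else if occAt A v = 2 ∧ (((v.1 - 1, v.2 - 1) ∈ A ∧ v ∈ A) ∨
            ((v.1 - 1, v.2) ∈ A ∧ (v.1, v.2 - 1) ∈ A)) then 2 else 0) := by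
  obtain ⟨x, y⟩ := v
  have hadj : (adjacent (x - 1, y - 1) (x - 1, y) ∧ adjacent (x - 1, y) (x - 1, y - 1)) ∧
      (adjacent (x - 1, y - 1) (x, y - 1) ∧ adjacent (x, y - 1) (x - 1, y - 1)) ∧
      (adjacent (x - 1, y) (x, y) ∧ adjacent (x, y) (x - 1, y)) ∧
      (adjacent (x, y - 1) (x, y) ∧ adjacent (x, y) (x, y - 1)) ∧
      (¬ adjacent (x - 1, y - 1) (x, y) ∧ ¬ adjacent (x, y) (x - 1, y - 1)) ∧
      (¬ adjacent (x - 1, y) (x, y - 1) ∧ ¬ adjacent (x, y - 1) (x - 1, y)) := by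
    refine ⟨⟨?_, ?_⟩, ⟨?_, ?_⟩, ⟨?_, ?_⟩, ⟨?_, ?_⟩, ⟨?_, ?_⟩, ⟨?_, ?_⟩⟩ <;>
      simp [adjacent_iff, Prod.ext_iff] <;> omega
  obtain ⟨⟨h12, h21⟩, ⟨h13, h31⟩, ⟨h24, h42⟩, ⟨h34, h43⟩, ⟨h14, h41⟩, ⟨h23, h32⟩⟩ := hadj
  have hself : ∀ c : Cell, ¬ adjacent c c := fun c => by simp [adjacent]
  rw [mem_vertexSet_iff] at hv
  simp only [boundaryEdgesAt, occAt, Finset.sum_filter, Finset.card_filter, sum_cellsAt,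
    h12, h21, h13, h31, h24, h42, h34, h43, h14, h41, h23, h32, hself, and_true, and_false,
    if_false]
  by_cases h1 : (x - 1, y - 1) ∈ A <;> by_cases h2 : (x - 1, y) ∈ A <;>
    by_cases h3 : (x, y - 1) ∈ A <;> by_cases h4 : (x, y) ∈ A <;>
    simp_all

lemma Tpoly_eq (A : Finset Cell) : Tpoly A = 4 * (vertexSet A).card - 4 * A.card := by
  have key := Finset.sum_congr rfl fun v hv => boundaryEdgesAt_add_occAt A (v := v) hv
  rw [Finset.sum_add_distrib, Finset.sum_add_distrib, Finset.sum_add_distrib,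
    sum_boundaryEdgesAt, sum_occAt, Finset.sum_const, smul_eq_mul] at key
  change 2 * perim A + 4 * A.card + convexCorners A
    = (vertexSet A).card * 4 + concaveCorners A at key
  rw [Tpoly]
  omega

lemma mem_vadd_iff {A : Finset Cell} {a b x y : ℤ} : (x, y) ∈ (a, b) +ᵥ A ↔ (x - a, y - b) ∈ A := by
  rw [← neg_neg (a, b), Finset.mem_neg_vadd_finset_iff]
  simp [sub_eq_neg_add]

lemma mem_image_swap {A : Finset Cell} {x y : ℤ} : (x, y) ∈ A.image Prod.swap ↔ (y, x) ∈ A :=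
  Prod.swap_injective.mem_finset_image (a := (y, x))

lemma exists_right_end {A : Finset Cell} {x y : ℤ} (h : (x, y) ∈ A) :
    ∃ z, x ≤ z ∧ (z, y) ∈ A ∧ (z + 1, y) ∉ A := by
  obtain ⟨M, hM⟩ := (A.image Prod.fst).bddAbove
  have hout : (max x M + 1, y) ∉ A := fun h' => by
    have := hM (Finset.mem_coe.mpr (Finset.mem_image_of_mem Prod.fst h'))
    simp only at this
    omega
  obtain ⟨z, hxz, -, hz, hz1⟩ :=
    Int.exists_and_not_succ_of_le (P := fun z => (z, y) ∈ A) h hout (by omega)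
  exact ⟨z, hxz, hz, hz1⟩

def RowConvex (A : Finset Cell) : Prop :=
  ∀ y x₁ x x₂ : ℤ, (x₁, y) ∈ A → (x₂, y) ∈ A → x₁ ≤ x → x ≤ x₂ → (x, y) ∈ A

def ColConvex (A : Finset Cell) : Prop :=
  ∀ x y₁ y y₂ : ℤ, (x, y₁) ∈ A → (x, y₂) ∈ A → y₁ ≤ y → y ≤ y₂ → (x, y) ∈ A

lemma rowConvex_image_swap {A : Finset Cell} : RowConvex (A.image Prod.swap) ↔ ColConvex A := by
  simp only [RowConvex, ColConvex, mem_image_swap]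

lemma image_snd_sdiff_vadd (A : Finset Cell) :
    ((e₁ +ᵥ A) \ A).image Prod.snd = A.image Prod.snd := by
  ext y
  simp only [Finset.mem_image, Finset.mem_sdiff, Prod.exists, exists_eq_right, mem_vadd_iff,
    sub_zero]
  constructor
  · rintro ⟨x, hx, -⟩
    exact ⟨x - 1, hx⟩
  · rintro ⟨x, hx⟩
    obtain ⟨z, -, hz, hz1⟩ := exists_right_end hx
    exact ⟨z + 1, by simpa using hz, hz1⟩

lemma card_image_snd_le_card_sdiff (A : Finset Cell) :
    (A.image Prod.snd).card ≤ ((e₁ +ᵥ A) \ A).card := by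
  rw [← image_snd_sdiff_vadd]
  exact Finset.card_image_le

/-- `(e₁ +ᵥ A) \ A` holds one cell just right of each maximal run of a row of `A`, and a row is
an interval exactly when it is a single run. -/
lemma card_sdiff_vadd_eq_iff_rowConvex (A : Finset Cell) :
    ((e₁ +ᵥ A) \ A).card = (A.image Prod.snd).card ↔ RowConvex A := by
  rw [← image_snd_sdiff_vadd, eq_comm, Finset.card_image_iff]
  constructor
  · intro hinj y x₁ x x₂ h₁ h₂ h₁x hx₂
    by_contra hx
    obtain ⟨z₁, -, hz₁x, hz₁, hz₁'⟩ :=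
      Int.exists_and_not_succ_of_le (P := fun z => (z, y) ∈ A) h₁ hx h₁x
    obtain ⟨z₂, hx₂z₂, hz₂, hz₂'⟩ := exists_right_end h₂
    have hend : ∀ z, (z, y) ∈ A → (z + 1, y) ∉ A →
        ((z + 1, y) : Cell) ∈ (↑((e₁ +ᵥ A) \ A) : Set Cell) := fun z hz hz' => by
      rw [Finset.mem_coe, Finset.mem_sdiff, mem_vadd_iff]
      simpa using ⟨hz, hz'⟩
    have := hinj (hend z₁ hz₁ hz₁') (hend z₂ hz₂ hz₂') rfl
    simp only [Prod.mk.injEq] at this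
    omega
  · rintro hrow ⟨x, y⟩ hxy ⟨x', y'⟩ hxy' (rfl : y = y')
    simp only [Finset.coe_sdiff, Set.mem_sdiff, Finset.mem_coe, mem_vadd_iff, sub_zero] at hxy hxy'
    rcases lt_trichotomy x x' with h | rfl | h
    · exact absurd (hrow y (x - 1) x (x' - 1) hxy.1 hxy'.1 (by omega) (by omega)) hxy.2
    · rfl
    · exact absurd (hrow y (x' - 1) x' (x - 1) hxy'.1 hxy.1 (by omega) (by omega)) hxy'.2

lemma sdiff_vadd_image_swap (A : Finset Cell) :
    (e₁ +ᵥ A.image Prod.swap) \ A.image Prod.swap = ((e₂ +ᵥ A) \ A).image Prod.swap := by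
  ext ⟨x, y⟩
  simp only [Finset.mem_sdiff, mem_vadd_iff, mem_image_swap, sub_zero]

lemma card_image_fst_le_card_sdiff (A : Finset Cell) :
    (A.image Prod.fst).card ≤ ((e₂ +ᵥ A) \ A).card := by
  have := card_image_snd_le_card_sdiff (A.image Prod.swap)
  rwa [sdiff_vadd_image_swap, Finset.card_image_of_injective _ Prod.swap_injective,
    Finset.image_image] at this

lemma card_sdiff_vadd_eq_iff_colConvex (A : Finset Cell) :
    ((e₂ +ᵥ A) \ A).card = (A.image Prod.fst).card ↔ ColConvex A := by
  rw [← rowConvex_image_swap, ← card_sdiff_vadd_eq_iff_rowConvex, sdiff_vadd_image_swap,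
    Finset.card_image_of_injective _ Prod.swap_injective, Finset.image_image]
  rfl

/-- Each boundary edge is exposed to the right, left, top or bottom, and there are as many
left as right (top as bottom) boundary edges. -/
lemma perim_eq (A : Finset Cell) :
    perim A = 2 * ((e₁ +ᵥ A) \ A).card + 2 * ((e₂ +ᵥ A) \ A).card := by
  have hnbrs : ∀ c : Cell, nbrs c = {e₁ +ᵥ c, -e₁ +ᵥ c,
      e₂ +ᵥ c, -e₂ +ᵥ c} := by
    intro c
    ext d
    simp only [nbrs, Finset.mem_insert, Finset.mem_singleton, vadd_eq_add, Prod.ext_iff,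
      Prod.fst_add, Prod.snd_add, Prod.fst_neg, Prod.snd_neg]
    omega
  have hcount : ∀ c : Cell, ((nbrs c).filter (· ∉ A)).card
      = (if e₁ +ᵥ c ∉ A then 1 else 0) + (if -e₁ +ᵥ c ∉ A then 1 else 0)
        + ((if e₂ +ᵥ c ∉ A then 1 else 0)
          + (if -e₂ +ᵥ c ∉ A then 1 else 0)) := by
    intro c
    rw [hnbrs, Finset.card_filter, Finset.sum_insert, Finset.sum_insert, Finset.sum_insert,
      Finset.sum_singleton] <;> simp [Prod.ext_iff, add_assoc]
  simp only [perim, hcount, Finset.sum_add_distrib, ← Finset.card_filter,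
    Finset.card_filter_vadd_notMem, Finset.card_neg_vadd_sdiff]
  ring

lemma two_mul_add_le_perim (A : Finset Cell) :
    2 * ((A.image Prod.fst).card + (A.image Prod.snd).card) ≤ perim A := by
  rw [perim_eq]
  have := card_image_snd_le_card_sdiff A
  have := card_image_fst_le_card_sdiff A
  omega

lemma perim_eq_of_convex {A : Finset Cell} (hrow : RowConvex A) (hcol : ColConvex A) :
    perim A = 2 * ((A.image Prod.fst).card + (A.image Prod.snd).card) := by
  rw [perim_eq, (card_sdiff_vadd_eq_iff_rowConvex A).mpr hrow,
    (card_sdiff_vadd_eq_iff_colConvex A).mpr hcol]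
  ring

lemma vertexSet_eq (A : Finset Cell) : vertexSet A =
    (A ∪ (e₂ +ᵥ A)) ∪ (e₁ +ᵥ (A ∪ (e₂ +ᵥ A))) := by
  ext ⟨x, y⟩
  simp only [mem_vertexSet_iff, Finset.mem_union, mem_vadd_iff, sub_zero]
  tauto

lemma card_vertexSet_eq (A : Finset Cell) : (vertexSet A).card = A.card
    + ((e₂ +ᵥ A) \ A).card
    + ((e₁ +ᵥ (A ∪ (e₂ +ᵥ A))) \ (A ∪ (e₂ +ᵥ A))).card := by
  rw [vertexSet_eq, Finset.card_union_vadd, Finset.card_union_vadd]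

lemma card_image_snd_union_vadd {A : Finset Cell} (hA : A.Nonempty) :
    (A.image Prod.snd).card + 1 ≤ ((A ∪ (e₂ +ᵥ A)).image Prod.snd).card := by
  obtain ⟨⟨x₀, m⟩, hx₀, hm⟩ :=
    Finset.mem_image.mp ((A.image Prod.snd).max'_mem (hA.image Prod.snd))
  have hm₁ : m + 1 ∉ A.image Prod.snd := fun h => by
    have := (A.image Prod.snd).le_max' _ h
    simp only at hm
    omega
  rw [← Finset.card_insert_of_notMem hm₁]
  refine Finset.card_le_card fun y hy => ?_
  obtain ⟨x, hx⟩ : ∃ x, (x, y - 1) ∈ A ∨ (x, y) ∈ A := by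
    rcases Finset.mem_insert.mp hy with rfl | hy
    · exact ⟨x₀, Or.inl (by simpa using hx₀)⟩
    · obtain ⟨⟨x, y'⟩, hxy, rfl⟩ := Finset.mem_image.mp hy
      exact ⟨x, Or.inr hxy⟩
  refine Finset.mem_image.mpr ⟨(x, y), ?_, rfl⟩
  simp only [Finset.mem_union, mem_vadd_iff, sub_zero]
  tauto

/-- If the thickened polyomino `A ∪ (A + (0, 1))` is row-convex, a gap in a row of `A` would be
filled from above and from below, contradicting column-convexity. -/
lemma rowConvex_of_union_vadd {A : Finset Cell}
    (h : RowConvex (A ∪ (e₂ +ᵥ A))) (hcol : ColConvex A) : RowConvex A := by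
  intro y x₁ x x₂ h₁ h₂ h₁x hx₂
  have hmem : ∀ z w, (z, w) ∈ A ∪ (e₂ +ᵥ A) ↔ (z, w) ∈ A ∨ (z, w - 1) ∈ A := by
    intro z w
    simp only [Finset.mem_union, mem_vadd_iff, sub_zero]
  by_contra hx
  have hup := (hmem x (y + 1)).mp
    (h (y + 1) x₁ x x₂ ((hmem _ _).mpr (by simp [h₁])) ((hmem _ _).mpr (by simp [h₂])) h₁x hx₂)
  have hdown := (hmem x y).mp (h y x₁ x x₂ ((hmem _ _).mpr (Or.inl h₁))
    ((hmem _ _).mpr (Or.inl h₂)) h₁x hx₂)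
  simp only [add_sub_cancel_right, hx, or_false, false_or] at hup hdown
  exact hx (hcol x (y - 1) y (y + 1) hdown hup (by omega) (by omega))

lemma card_vertexSet_ge {A : Finset Cell} (hA : A.Nonempty) :
    A.card + (A.image Prod.fst).card + (A.image Prod.snd).card + 1 ≤ (vertexSet A).card := by
  have := card_image_fst_le_card_sdiff A
  have := card_image_snd_le_card_sdiff (A ∪ (e₂ +ᵥ A))
  have := card_image_snd_union_vadd hA
  rw [card_vertexSet_eq]
  omega

lemma convex_of_card_vertexSet_le {A : Finset Cell} (hA : A.Nonempty)
    (h : (vertexSet A).card ≤ A.card + (A.image Prod.fst).card + (A.image Prod.snd).card + 1) :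
    RowConvex A ∧ ColConvex A := by
  have h₁ := card_image_fst_le_card_sdiff A
  have h₂ := card_image_snd_le_card_sdiff (A ∪ (e₂ +ᵥ A))
  have h₃ := card_image_snd_union_vadd hA
  rw [card_vertexSet_eq] at h
  have hcol := (card_sdiff_vadd_eq_iff_colConvex A).mp (by omega)
  exact ⟨rowConvex_of_union_vadd ((card_sdiff_vadd_eq_iff_rowConvex _).mp (by omega)) hcol, hcol⟩

instance (A : Finset Cell) : Std.Symm (adjIn A) :=
  ⟨fun _ _ h => ⟨h.2.1, h.1, adjacent_comm.mp h.2.2⟩⟩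

lemma reflTransGen_of_rowConvex {A : Finset Cell} (hrow : RowConvex A) {y x₁ x₂ : ℤ}
    (h₁ : (x₁, y) ∈ A) (h₂ : (x₂, y) ∈ A) : Relation.ReflTransGen (adjIn A) (x₁, y) (x₂, y) := by
  wlog hle : x₁ ≤ x₂ generalizing x₁ x₂
  · exact Std.Symm.symm _ _ (this h₂ h₁ (by omega))
  induction x₂, hle using Int.leInduction with
  | base => exact .refl
  | succ x hx ih =>
    have hx' : (x, y) ∈ A := hrow y x₁ x (x + 1) h₁ h₂ hx (by omega)
    exact (ih hx').tail ⟨hx', h₂, by simp [adjacent]⟩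

lemma polyConnected_of_rowConvex {A : Finset Cell} (hA : A.Nonempty) (hrow : RowConvex A)
    (hdomino : ∀ p ∈ A, ∀ q ∈ A, p.2 < q.2 → ∃ x, (x, p.2) ∈ A ∧ (x, p.2 + 1) ∈ A) :
    PolyConnected A := by
  have key : ∀ d : ℕ, ∀ p ∈ A, ∀ q ∈ A, q.2 = p.2 + d →
      Relation.ReflTransGen (adjIn A) p q := by
    intro d
    induction d with
    | zero =>
      rintro ⟨x₁, y⟩ h₁ ⟨x₂, y'⟩ h₂ (rfl : y' = y + 0)
      simpa using reflTransGen_of_rowConvex hrow h₁ (by simpa using h₂)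
    | succ d ih =>
      rintro ⟨x₁, y⟩ h₁ q hq hd
      obtain ⟨x, hx, hx'⟩ := hdomino (x₁, y) h₁ q hq (by simp only at hd ⊢; omega)
      exact ((reflTransGen_of_rowConvex hrow h₁ hx).tail ⟨hx, hx', by simp [adjacent]⟩).trans
        (ih (x, y + 1) hx' q hq (by simp only at hd ⊢; push_cast at hd; omega))
  refine ⟨hA, fun p hp q hq => ?_⟩
  rcases le_total p.2 q.2 with h | h
  · exact key (q.2 - p.2).toNat p hp q hq (by omega)
  · exact Std.Symm.symm _ _ (key (p.2 - q.2).toNat q hq p hp (by omega))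

lemma exists_mem_of_reflTransGen {A : Finset Cell} {π : Cell → ℤ}
    (hπ : ∀ c d, adjacent c d → π d ≤ π c + 1) {p q : Cell}
    (h : Relation.ReflTransGen (adjIn A) p q) (hp : p ∈ A) {z : ℤ} (hpz : π p ≤ z)
    (hzq : z ≤ π q) : ∃ c ∈ A, π c = z := by
  induction h with
  | refl => exact ⟨p, hp, le_antisymm hpz hzq⟩
  | @tail b c _ hbc ih =>
    by_cases hzb : z ≤ π b
    · exact ih hzb
    · exact ⟨c, hbc.2.1, le_antisymm (by have := hπ b c hbc.2.2; omega) hzq⟩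

/-- For `π = Prod.fst` (`Prod.snd`) the right-hand side is `polyWidth A` (`polyHeight A`). -/
lemma card_image_eq_of_polyConnected {A : Finset Cell} (hA : PolyConnected A) {π : Cell → ℤ}
    (hπ : ∀ c d, adjacent c d → π d ≤ π c + 1) :
    ((A.image π).card : ℤ)
      = WithBot.unbotD 0 (A.image π).max - WithTop.untopD 0 (A.image π).min + 1 := by
  have hne := hA.1.image π
  obtain ⟨p, hp, hpmin⟩ := Finset.mem_image.mp ((A.image π).min'_mem hne)
  obtain ⟨q, hq, hqmax⟩ := Finset.mem_image.mp ((A.image π).max'_mem hne)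
  have hIcc : A.image π = Finset.Icc ((A.image π).min' hne) ((A.image π).max' hne) := by
    ext z
    refine ⟨fun hz => Finset.mem_Icc.mpr ⟨Finset.min'_le _ _ hz, Finset.le_max' _ _ hz⟩,
      fun hz => ?_⟩
    rw [Finset.mem_Icc, ← hpmin, ← hqmax] at hz
    obtain ⟨c, hc, rfl⟩ := exists_mem_of_reflTransGen hπ (hA.2 p hp q hq) hp hz.1 hz.2
    exact Finset.mem_image_of_mem π hc
  have hcard := congrArg Finset.card hIcc
  rw [Int.card_Icc] at hcard
  rw [← Finset.coe_max' hne, ← Finset.coe_min' hne, WithBot.unbotD_coe, WithTop.untopD_coe, hcard]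
  have := (A.image π).min'_le _ ((A.image π).max'_mem hne)
  omega

lemma monotonePoly_of_convex {A : Finset Cell} (hA : PolyConnected A) (hrow : RowConvex A)
    (hcol : ColConvex A) : MonotonePoly A := by
  have hW : polyWidth A = (A.image Prod.fst).card :=
    (card_image_eq_of_polyConnected hA fun c d h => by
      rcases adjacent_iff.mp h with rfl | rfl | rfl | rfl <;> simp only <;> omega).symm
  have hH : polyHeight A = (A.image Prod.snd).card :=
    (card_image_eq_of_polyConnected hA fun c d h => by
      rcases adjacent_iff.mp h with rfl | rfl | rfl | rfl <;> simp only <;> omega).symm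
  rw [MonotonePoly, hW, hH, perim_eq_of_convex hrow hcol]
  push_cast
  ring

lemma exists_four_mul_le_sq (n : ℕ) : ∃ k, 4 * n ≤ k ^ 2 :=
  ⟨2 * n, by nlinarith [Nat.le_mul_self n]⟩

/-- `⌈2√n⌉`, the least semiperimeter `a + b` of a rectangle with `n ≤ a * b` cells. -/
def minSemiperimeter (n : ℕ) : ℕ := Nat.find (exists_four_mul_le_sq n)

lemma minSemiperimeter_le_add {n a b : ℕ} (h : n ≤ a * b) : minSemiperimeter n ≤ a + b :=
  Nat.find_min' _ (by nlinarith [sq_nonneg ((a : ℤ) - b)])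

lemma lt_minSemiperimeter {n m : ℕ} (h : m ^ 2 < 4 * n) : m < minSemiperimeter n :=
  (Nat.lt_find_iff _ _).mpr fun k hk hk' => by nlinarith [Nat.pow_le_pow_left hk 2]

lemma minSemiperimeter_add_lt {p q a b c d : ℕ} (hp : p ≤ a * b) (hq : q ≤ c * d)
    (ha : 1 ≤ a) (hb : 1 ≤ b) (hc : 1 ≤ c) (hd : 1 ≤ d) :
    minSemiperimeter (p + q) < a + b + c + d := by
  obtain ⟨s, hs⟩ : ∃ s, a + b + c + d = s + 1 := ⟨a + b + c + d - 1, by omega⟩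
  have : minSemiperimeter (p + q) ≤ s := Nat.find_min' _ (by
    have hs' : (s : ℤ) = a + b + c + d - 1 := by omega
    zify at hp hq ha hb hc hd ⊢
    nlinarith [sq_nonneg ((a : ℤ) - b), sq_nonneg ((c : ℤ) - d),
      mul_le_mul (show (1 : ℤ) ≤ a + b - 1 by omega) (show (1 : ℤ) ≤ c + d - 1 by omega)
        zero_le_one (by omega)])
  omega

lemma card_le_card_image_fst_mul (A : Finset Cell) :
    A.card ≤ (A.image Prod.fst).card * (A.image Prod.snd).card := by
  rw [← Finset.card_product]
  exact Finset.card_le_card fun c hc =>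
    Finset.mem_product.mpr ⟨Finset.mem_image_of_mem _ hc, Finset.mem_image_of_mem _ hc⟩

lemma minSemiperimeter_le_card_image (A : Finset Cell) :
    minSemiperimeter A.card ≤ (A.image Prod.fst).card + (A.image Prod.snd).card :=
  minSemiperimeter_le_add (card_le_card_image_fst_mul A)

lemma Tpoly_ge {A : Finset Cell} (hA : A.Nonempty) :
    4 * ((minSemiperimeter A.card : ℤ) + 1) ≤ Tpoly A := by
  have := card_vertexSet_ge hA
  have := minSemiperimeter_le_card_image A
  rw [Tpoly_eq]
  omega

lemma convex_of_Tpoly_le {A : Finset Cell} (hA : A.Nonempty)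
    (hT : Tpoly A ≤ 4 * ((minSemiperimeter A.card : ℤ) + 1)) :
    RowConvex A ∧ ColConvex A ∧
      (A.image Prod.fst).card + (A.image Prod.snd).card = minSemiperimeter A.card := by
  have := card_vertexSet_ge hA
  have := minSemiperimeter_le_card_image A
  rw [Tpoly_eq] at hT
  obtain ⟨hrow, hcol⟩ := convex_of_card_vertexSet_le hA (by omega)
  exact ⟨hrow, hcol, by omega⟩

lemma card_image_add_card_image_of_cut {A : Finset Cell} (hcol : ColConvex A) {y : ℤ}
    (hcut : ∀ x, (x, y) ∈ A → (x, y + 1) ∉ A) :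
    (A.image Prod.fst).card + (A.image Prod.snd).card
      = ((A.filter (·.2 ≤ y)).image Prod.fst).card + ((A.filter (·.2 ≤ y)).image Prod.snd).card
        + (((A.filter (¬ ·.2 ≤ y)).image Prod.fst).card
          + ((A.filter (¬ ·.2 ≤ y)).image Prod.snd).card) := by
  have hsplit : ∀ f : Cell → ℤ, (∀ b ∈ A, ∀ c ∈ A, b.2 ≤ y → y < c.2 → f b ≠ f c) →
      (A.image f).card = ((A.filter (·.2 ≤ y)).image f).card
        + ((A.filter (¬ ·.2 ≤ y)).image f).card := by
    intro f hf
    rw [← Finset.card_union_of_disjoint, ← Finset.image_union, Finset.filter_union_filter_not_eq]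
    rw [Finset.disjoint_left]
    rintro z hzB hzC
    obtain ⟨b, hb, rfl⟩ := Finset.mem_image.mp hzB
    obtain ⟨c, hc, hbc⟩ := Finset.mem_image.mp hzC
    simp only [Finset.mem_filter, not_le] at hb hc
    exact hf b hb.1 c hc.1 hb.2 hc.2 hbc.symm
  have hcols := hsplit Prod.fst fun ⟨x, y₁⟩ hb ⟨x', y₂⟩ hc h₁ h₂ hx => by
    simp only at hx h₁ h₂
    subst hx
    exact hcut _ (hcol _ y₁ y y₂ hb hc h₁ (by omega)) (hcol _ y₁ (y + 1) y₂ hb hc (by omega) h₂)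
  have hrows := hsplit Prod.snd fun b _ c _ h₁ h₂ h => by omega
  omega

/-- Otherwise the parts of `A` below and above the cut have disjoint columns, and together they
need more rows plus columns than `minSemiperimeter A.card` (`minSemiperimeter_add_lt`). -/
lemma exists_vertical_domino {A : Finset Cell} (hcol : ColConvex A)
    (hK : (A.image Prod.fst).card + (A.image Prod.snd).card = minSemiperimeter A.card)
    {p q : Cell} (hp : p ∈ A) (hq : q ∈ A) (hpq : p.2 < q.2) :
    ∃ x, (x, p.2) ∈ A ∧ (x, p.2 + 1) ∈ A := by
  by_contra hcut
  push Not at hcut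
  have hB : (A.filter (·.2 ≤ p.2)).Nonempty := ⟨p, Finset.mem_filter.mpr ⟨hp, le_rfl⟩⟩
  have hC : (A.filter (¬ ·.2 ≤ p.2)).Nonempty := ⟨q, Finset.mem_filter.mpr ⟨hq, by omega⟩⟩
  have hlt := minSemiperimeter_add_lt (card_le_card_image_fst_mul _) (card_le_card_image_fst_mul _)
    (hB.image _).card_pos (hB.image _).card_pos (hC.image _).card_pos (hC.image _).card_pos
  rw [Finset.card_filter_add_card_filter_not] at hlt
  have := card_image_add_card_image_of_cut hcol hcut
  omega

lemma mem_baseStd {l ζ a k : ℕ} {x y : ℤ} : (x, y) ∈ baseStd l ζ a k ↔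
    (0 ≤ x ∧ x < l + ζ ∧ 0 ≤ y ∧ y < l) ∨ (a ≤ x ∧ x < a + k ∧ y = l) := by
  simp only [baseStd, Finset.mem_union, Finset.mem_image, Finset.mem_product,
    Finset.mem_range, Prod.ext_iff]
  constructor
  · rintro (⟨⟨i, j⟩, ⟨hi, hj⟩, rfl, rfl⟩ | ⟨i, hi, rfl, rfl⟩) <;> push_cast <;> omega
  · rintro (⟨h₁, h₂, h₃, h₄⟩ | ⟨h₁, h₂, rfl⟩)
    · exact Or.inl ⟨(x.toNat, y.toNat), ⟨by omega, by omega⟩, by omega, by omega⟩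
    · exact Or.inr ⟨(x - a).toNat, by omega, by push_cast; omega, rfl⟩

lemma card_baseStd (l ζ a k : ℕ) :
    (baseStd l ζ a k).card = l * (l + ζ) + k := by
  rw [baseStd, Finset.card_union_of_disjoint]
  · rw [Finset.card_image_of_injective _ fun p q h => by
        simp only [Prod.ext_iff, Nat.cast_inj] at h; exact Prod.ext h.1 h.2,
      Finset.card_image_of_injective _ fun i j h => by simp only [Prod.ext_iff] at h; omega,
      Finset.card_product, Finset.card_range, Finset.card_range, Finset.card_range, mul_comm]
  · rw [Finset.disjoint_left]
    rintro ⟨x, y⟩ h₁ h₂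
    simp only [Finset.mem_image, Finset.mem_product, Finset.mem_range, Prod.ext_iff] at h₁ h₂
    omega

lemma card_vertexSet_baseStd_le {l ζ a k : ℕ} (hl : 1 ≤ l) (hζ : ζ ≤ 1) (hak : a + k ≤ l + ζ) :
    (vertexSet (baseStd l ζ a k)).card
      ≤ (baseStd l ζ a k).card + minSemiperimeter (baseStd l ζ a k).card + 1 := by
  rw [card_baseStd]
  set rect := Finset.Icc (0 : ℤ) (l + ζ) ×ˢ Finset.Icc (0 : ℤ) l
  have hrect : rect.card = l * (l + ζ) + (2 * l + ζ) + 1 := by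
    rw [Finset.card_product, Int.card_Icc, Int.card_Icc]
    rw [show ((l : ℤ) + ζ + 1 - 0).toNat = l + ζ + 1 by omega,
      show ((l : ℤ) + 1 - 0).toNat = l + 1 by omega]
    ring
  rcases Nat.eq_zero_or_pos k with rfl | hk
  · have hsub : vertexSet (baseStd l ζ a 0) ⊆ rect := by
      rintro ⟨x, y⟩ hv
      simp only [mem_vertexSet_iff, mem_baseStd] at hv
      simp only [rect, Finset.mem_product, Finset.mem_Icc]
      omega
    obtain ⟨m, hm⟩ : ∃ m, 2 * l + ζ = m + 1 := ⟨2 * l + ζ - 1, by omega⟩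
    have hK : m < minSemiperimeter (l * (l + ζ) + 0) :=
      lt_minSemiperimeter (by interval_cases ζ <;> nlinarith)
    have := Finset.card_le_card hsub
    omega
  · have hsub : vertexSet (baseStd l ζ a k)
        ⊆ rect ∪ Finset.Icc (a : ℤ) (a + k) ×ˢ {(l : ℤ) + 1} := by
      rintro ⟨x, y⟩ hv
      simp only [mem_vertexSet_iff, mem_baseStd] at hv
      simp only [rect, Finset.mem_union, Finset.mem_product, Finset.mem_Icc,
        Finset.mem_singleton]
      omega
    have hbar : (Finset.Icc (a : ℤ) (a + k) ×ˢ {(l : ℤ) + 1}).card = k + 1 := by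
      rw [Finset.card_product, Int.card_Icc, Finset.card_singleton]
      omega
    have hK : 2 * l + ζ < minSemiperimeter (l * (l + ζ) + k) :=
      lt_minSemiperimeter (by interval_cases ζ <;> nlinarith)
    have := (Finset.card_le_card hsub).trans (Finset.card_union_le _ _)
    omega

def signedSwap (a b : ℤ) (sw : Bool) (c : Cell) : Cell :=
  if sw then (a * c.2, b * c.1) else (a * c.1, b * c.2)

lemma exists_signedSwap_of_mem_dihedralMaps {f : Cell → Cell} (hf : f ∈ dihedralMaps) :
    ∃ a b : ℤ, ∃ sw : Bool, (a = 1 ∨ a = -1) ∧ (b = 1 ∨ b = -1) ∧ f = signedSwap a b sw := by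
  simp only [dihedralMaps, List.mem_cons, List.not_mem_nil, or_false] at hf
  rcases hf with rfl | rfl | rfl | rfl | rfl | rfl | rfl | rfl
  · exact ⟨1, 1, false, by simp, by simp, by funext c; simp [signedSwap]⟩
  · exact ⟨-1, 1, false, by simp, by simp, by funext c; simp [signedSwap]⟩
  · exact ⟨1, -1, false, by simp, by simp, by funext c; simp [signedSwap]⟩
  · exact ⟨-1, -1, false, by simp, by simp, by funext c; simp [signedSwap]⟩
  · exact ⟨1, 1, true, by simp, by simp, by funext c; simp [signedSwap]⟩
  · exact ⟨-1, 1, true, by simp, by simp, by funext c; simp [signedSwap]⟩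
  · exact ⟨1, -1, true, by simp, by simp, by funext c; simp [signedSwap]⟩
  · exact ⟨-1, -1, true, by simp, by simp, by funext c; simp [signedSwap]⟩

lemma signedSwap_injective {a b : ℤ} (ha : a = 1 ∨ a = -1) (hb : b = 1 ∨ b = -1) (sw : Bool) :
    Function.Injective (signedSwap a b sw) := by
  rcases ha with rfl | rfl <;> rcases hb with rfl | rfl <;> cases sw <;>
    (intro v w h
     simp only [signedSwap, Prod.ext_iff, Bool.false_eq_true, reduceIte] at h
     rw [Prod.ext_iff]
     omega)

/-- A reflection `a = -1` of a coordinate exchanges the lower and upper corners of a cell in that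
coordinate, whence the offset of the induced map on corners. -/
lemma corners_signedSwap_add {a b : ℤ} (ha : a = 1 ∨ a = -1) (hb : b = 1 ∨ b = -1) (sw : Bool)
    (t c : Cell) : corners (signedSwap a b sw c + t) = (corners c).image
      fun v => signedSwap a b sw v + t + (if a = 1 then 0 else 1, if b = 1 then 0 else 1) := by
  rcases ha with rfl | rfl <;> rcases hb with rfl | rfl <;> cases sw <;>
    (ext v
     simp only [corners, signedSwap, Finset.image_insert, Finset.image_singleton,
       Finset.mem_insert, Finset.mem_singleton, Prod.ext_iff, Prod.fst_add, Prod.snd_add,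
       Bool.false_eq_true, reduceIte]
     norm_num
     omega)

lemma card_image_dihedral {f : Cell → Cell} (hf : f ∈ dihedralMaps) (t : Cell)
    (X : Finset Cell) :
    (X.image fun c => (((f c).1 + t.1, (f c).2 + t.2) : Cell)).card = X.card := by
  obtain ⟨a, b, sw, ha, hb, rfl⟩ := exists_signedSwap_of_mem_dihedralMaps hf
  exact Finset.card_image_of_injective _ fun v w h =>
    signedSwap_injective ha hb sw (add_right_cancel (a := _) (b := t) h)

lemma card_vertexSet_image_dihedral_le {f : Cell → Cell} (hf : f ∈ dihedralMaps) (t : Cell)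
    (X : Finset Cell) :
    (vertexSet (X.image fun c => (((f c).1 + t.1, (f c).2 + t.2) : Cell))).card
      ≤ (vertexSet X).card := by
  obtain ⟨a, b, sw, ha, hb, rfl⟩ := exists_signedSwap_of_mem_dihedralMaps hf
  have hV : vertexSet (X.image fun c => signedSwap a b sw c + t) = (vertexSet X).image
      fun v => signedSwap a b sw v + t + (if a = 1 then 0 else 1, if b = 1 then 0 else 1) := by
    change (X.image _).biUnion corners = (X.biUnion corners).image _
    rw [Finset.biUnion_image, Finset.image_biUnion]
    exact Finset.biUnion_congr rfl fun c _ => corners_signedSwap_add ha hb sw t c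
  exact hV ▸ Finset.card_image_le

lemma Tpoly_le_of_isStandardPoly {A : Finset Cell} (h : IsStandardPoly A) :
    Tpoly A ≤ 4 * ((minSemiperimeter A.card : ℤ) + 1) := by
  obtain ⟨l, ζ, a, k, hl, hζ, hak, f, hf, t, rfl⟩ := h
  have := card_vertexSet_image_dihedral_le hf t (baseStd l ζ a k)
  have := card_vertexSet_baseStd_le hl hζ hak
  rw [Tpoly_eq, card_image_dihedral hf]
  omega

lemma exists_isStandardPoly_card {n : ℕ} (hn : 0 < n) :
    ∃ A : Finset Cell, A.card = n ∧ IsStandardPoly A := by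
  obtain ⟨l, hl₁, hl₂⟩ : ∃ l, l * l ≤ n ∧ n < l * l + 2 * l + 1 :=
    ⟨n.sqrt, Nat.sqrt_le n, by nlinarith [Nat.lt_succ_sqrt n]⟩
  have hl : 1 ≤ l := by nlinarith
  have hid : (fun c : Cell => (c.1, c.2)) ∈ dihedralMaps := by simp [dihedralMaps]
  have himage : ∀ X : Finset Cell, X = X.image fun c =>
      ((((fun c : Cell => (c.1, c.2)) c).1 + (0 : Cell).1,
        ((fun c : Cell => (c.1, c.2)) c).2 + (0 : Cell).2) : Cell) := fun X => by simp
  by_cases hn' : n ≤ l * l + l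
  · refine ⟨baseStd l 0 0 (n - l * l), ?_, l, 0, 0, _, hl, zero_le_one, by omega, _, hid, 0,
      himage _⟩
    rw [card_baseStd, add_zero]
    omega
  · refine ⟨baseStd l 1 0 (n - l * l - l), ?_, l, 1, 0, _, hl, le_rfl, by omega, _, hid, 0,
      himage _⟩
    rw [card_baseStd, mul_add, mul_one]
    omega

end Polyomino

open Polyomino

/-- every minimizer of T among polyominoes with n unit squares is a
connected monotone polyomino of minimal perimeter; and the standard polyominoes with n
unit squares are among the minimizers of T. -/
theorem T_minimizers_are_monotone_min_perimeter (n : ℕ) (hn : 0 < n) :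
    (∀ A : Finset Cell, A.card = n →
        (∀ B : Finset Cell, B.card = n → Tpoly A ≤ Tpoly B) →
        PolyConnected A ∧ MonotonePoly A ∧
          ∀ B : Finset Cell, B.card = n → perim A ≤ perim B) ∧
    (∀ A : Finset Cell, A.card = n → IsStandardPoly A →
        ∀ B : Finset Cell, B.card = n → Tpoly A ≤ Tpoly B) := by
  refine ⟨fun A hA hmin => ?_, fun A hA hstd B hB => ?_⟩
  · have hAne : A.Nonempty := Finset.card_pos.mp (hA ▸ hn)
    obtain ⟨S, hS, hSstd⟩ := exists_isStandardPoly_card hn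
    obtain ⟨hrow, hcol, hK⟩ := convex_of_Tpoly_le hAne
      (hA ▸ hS ▸ (hmin S hS).trans (Tpoly_le_of_isStandardPoly hSstd))
    have hconn := polyConnected_of_rowConvex hAne hrow fun p hp q hq =>
      exists_vertical_domino hcol hK hp hq
    refine ⟨hconn, monotonePoly_of_convex hconn hrow hcol, fun B hB => ?_⟩
    calc perim A = 2 * minSemiperimeter B.card := by rw [perim_eq_of_convex hrow hcol, hK, hA, hB]
      _ ≤ 2 * ((B.image Prod.fst).card + (B.image Prod.snd).card) :=
        Nat.mul_le_mul_left 2 (minSemiperimeter_le_card_image B)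
      _ ≤ perim B := two_mul_add_le_perim B
  · calc Tpoly A ≤ 4 * ((minSemiperimeter A.card : ℤ) + 1) := Tpoly_le_of_isStandardPoly hstd
      _ = 4 * ((minSemiperimeter B.card : ℤ) + 1) := by rw [hA, hB]
      _ ≤ Tpoly B := Tpoly_ge (Finset.card_pos.mp (hB ▸ hn))
end

section
/- For every connected polyomino c, the perimeter satisfies P(c) ≥ 2[ℓ1(c) + ℓ2(c)] + 4Q(c), where ℓ1(c) and ℓ2(c) are the numbers of columns and rows of the circumscribing rectangle of c and Q(c) is the number of holes of c. -/
/-!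
Count boundary edges: pairs `(c, e)` of a cell `c ∈ A` and a unit vector `e` with `c + e ∉ A`.
In each row met by `A`, the last cell of `A` in direction `e = ±(1, 0)` carries such an edge
whose outer cell sees infinity along a ray, so it lies in no hole; likewise for columns and
`e = ±(0, 1)`. By connectedness the rows and columns met by `A` are all those of the bounding
box, which gives `2 (ℓ₁ + ℓ₂)` edges. A hole is finite, so in each direction `e` it has a first
cell, entered from `A` through a boundary edge `(c, e)`. Distinct holes are disjoint, so these
`4 Q` edges are distinct from each other and from the previous ones.
-/

open Finset

theorem Set.exists_finset_subset_card_eq_ncard {α : Type*} (s : Set α) :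
    ∃ t : Finset α, ↑t ⊆ s ∧ #t = s.ncard := by
  by_cases hs : s.Finite
  · exact ⟨hs.toFinset, by simp, (Set.ncard_eq_toFinset_card s hs).symm⟩
  · exact ⟨∅, by simp, by simp [Set.Infinite.ncard hs]⟩

theorem Finset.natCast_card_eq_unbotD_max_sub_untopD_min_add_one {s : Finset ℤ}
    (hs : s.Nonempty) (h : (↑s : Set ℤ).OrdConnected) :
    (#s : ℤ) = WithBot.unbotD 0 s.max - WithTop.untopD 0 s.min + 1 := by
  have hIcc : s = Icc (s.min' hs) (s.max' hs) := by
    refine Subset.antisymm (fun x hx => mem_Icc.2 ⟨min'_le _ _ hx, le_max' _ _ hx⟩) ?_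
    intro x hx
    exact h.out (min'_mem s hs) (max'_mem s hs) (mem_Icc.1 hx)
  rw [← coe_max' hs, ← coe_min' hs, WithBot.unbotD_coe, WithTop.untopD_coe]
  conv_lhs => rw [hIcc, Int.card_Icc]
  have := min'_le_max' s hs
  omega

namespace Polyomino

def dot (e c : Cell) : ℤ := e.1 * c.1 + e.2 * c.2

def lineIndex (e : Cell) : Cell → ℤ := if e.1 = 0 then Prod.fst else Prod.snd

def boundaryEdges (A : Finset Cell) : Finset (Cell × Cell) :=
  (A ×ˢ nbrs 0).filter (fun p => p.1 + p.2 ∉ A)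

def ComplAdj (A : Finset Cell) (u v : Cell) : Prop := adjacent u v ∧ u ∉ A ∧ v ∉ A

def holes (A : Finset Cell) : Set (Set Cell) :=
  {K | ∃ d, d ∉ A ∧ K = {e | Relation.ReflTransGen (ComplAdj A) d e} ∧ K.Finite}

theorem numHoles_eq_ncard_holes (A : Finset Cell) : numHoles A = (holes A).ncard := rfl

theorem mem_nbrs_zero {e : Cell} :
    e ∈ nbrs 0 ↔ e = (1, 0) ∨ e = (-1, 0) ∨ e = (0, 1) ∨ e = (0, -1) := by
  simp [nbrs]

theorem adjacent_comm_s6 {x y : Cell} : adjacent x y ↔ adjacent y x := by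
  rw [adjacent, adjacent, abs_sub_comm x.1, abs_sub_comm x.2]

theorem dot_add_smul (e c : Cell) (k : ℤ) : dot e (c + k • e) = dot e c + k * dot e e := by
  simp only [dot, Prod.fst_add, Prod.snd_add, Prod.smul_fst, Prod.smul_snd, smul_eq_mul]
  ring

section Directions

variable {e : Cell} (he : e ∈ nbrs 0)
include he

theorem adjacent_add (c : Cell) : adjacent c (c + e) := by
  rcases mem_nbrs_zero.1 he with rfl | rfl | rfl | rfl <;> simp [adjacent]

theorem dot_self : dot e e = 1 := by
  rcases mem_nbrs_zero.1 he with rfl | rfl | rfl | rfl <;> rfl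

theorem lineIndex_add_smul (c : Cell) (k : ℤ) : lineIndex e (c + k • e) = lineIndex e c := by
  rcases mem_nbrs_zero.1 he with rfl | rfl | rfl | rfl <;> simp [lineIndex]

end Directions

theorem nbrs_eq_map (c : Cell) : nbrs c = (nbrs 0).map (addLeftEmbedding c) := by
  simp [nbrs, Prod.add_def, sub_eq_add_neg]

theorem perim_eq_card_boundaryEdges (A : Finset Cell) : perim A = #(boundaryEdges A) := by
  rw [boundaryEdges, card_filter, sum_product, perim]
  refine sum_congr rfl fun c _ => ?_
  rw [nbrs_eq_map, filter_map, card_map, card_filter]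
  rfl

theorem ComplAdj.symm {A : Finset Cell} {u v : Cell} (h : ComplAdj A u v) : ComplAdj A v u :=
  ⟨adjacent_comm_s6.1 h.1, h.2.2, h.2.1⟩

instance (A : Finset Cell) : Std.Symm (ComplAdj A) := ⟨fun _ _ => ComplAdj.symm⟩

section Holes

variable {A : Finset Cell} {K : Set Cell}

theorem eq_setOf_of_mem_holes (hK : K ∈ holes A) {c : Cell} (hc : c ∈ K) :
    K = {x | Relation.ReflTransGen (ComplAdj A) c x} := by
  obtain ⟨d, -, rfl, -⟩ := hK
  ext x
  exact ⟨fun hx => (Std.Symm.symm _ _ hc).trans hx, fun hx => hc.trans hx⟩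

theorem notMem_of_mem_holes (hK : K ∈ holes A) {c : Cell} (hc : c ∈ K) : c ∉ A := by
  obtain ⟨d, hd, rfl, -⟩ := hK
  induction hc with
  | refl => exact hd
  | tail _ h _ => exact h.2.2

theorem mem_of_mem_holes_of_complAdj (hK : K ∈ holes A) {c c' : Cell} (hc : c ∈ K)
    (h : ComplAdj A c c') : c' ∈ K := by
  rw [eq_setOf_of_mem_holes hK hc]
  exact Relation.ReflTransGen.single h

theorem eq_of_mem_holes {K' : Set Cell} (hK : K ∈ holes A) (hK' : K' ∈ holes A) {c : Cell}
    (hc : c ∈ K) (hc' : c ∈ K') : K = K' := by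
  rw [eq_setOf_of_mem_holes hK hc, eq_setOf_of_mem_holes hK' hc']

theorem notMem_holes_of_forall_add_smul_notMem (hK : K ∈ holes A) {c e : Cell}
    (he : e ∈ nbrs 0) (hray : ∀ k : ℕ, c + (k : ℤ) • e ∉ A) : c ∉ K := by
  intro hc
  have hmem : ∀ k : ℕ, c + (k : ℤ) • e ∈ K := by
    intro k
    induction k with
    | zero => simpa using hc
    | succ k ih =>
      have hstep : c + ((k + 1 : ℕ) : ℤ) • e = c + (k : ℤ) • e + e := by
        push_cast; rw [add_smul, one_smul, add_assoc]
      rw [hstep]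
      exact mem_of_mem_holes_of_complAdj hK ih ⟨adjacent_add he _, hray k, hstep ▸ hray (k + 1)⟩
  have hinj : Function.Injective fun k : ℕ => c + (k : ℤ) • e := by
    intro k l hkl
    have := congrArg (dot e) hkl
    simp only [dot_add_smul, dot_self he, mul_one] at this
    omega
  obtain ⟨-, -, -, hfin⟩ := hK
  exact Set.infinite_of_injective_forall_mem hinj hmem hfin

theorem exists_boundaryEdge_into_hole (hK : K ∈ holes A) {e : Cell} (he : e ∈ nbrs 0) :
    ∃ c, (c, e) ∈ boundaryEdges A ∧ c + e ∈ K := by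
  obtain ⟨hfin, hne⟩ : K.Finite ∧ K.Nonempty := by
    obtain ⟨d, -, rfl, hfin⟩ := hK
    exact ⟨hfin, d, Relation.ReflTransGen.refl⟩
  obtain ⟨h, hhK, hmin⟩ := hfin.toFinset.exists_min_image (dot e) (by simpa using hne)
  rw [Set.Finite.mem_toFinset] at hhK
  have hhA := notMem_of_mem_holes hK hhK
  have hbefore : h - e ∉ K := fun hK' => by
    have := hmin _ (hfin.mem_toFinset.2 hK')
    rw [sub_eq_add_neg, ← neg_one_smul ℤ e, dot_add_smul, dot_self he] at this
    omega
  have hadj : adjacent h (h - e) := adjacent_comm_s6.1 (by simpa using adjacent_add he (h - e))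
  have hin : h - e ∈ A := by
    by_contra hA
    exact hbefore (mem_of_mem_holes_of_complAdj hK hhK ⟨hadj, hhA, hA⟩)
  refine ⟨h - e, ?_, by simpa using hhK⟩
  simp [boundaryEdges, hin, he, hhA]

end Holes

theorem exists_boundaryEdge_escaping {A : Finset Cell} {e : Cell} (he : e ∈ nbrs 0) {t : ℤ}
    (ht : t ∈ A.image (lineIndex e)) :
    ∃ c, (c, e) ∈ boundaryEdges A ∧ lineIndex e c = t ∧ ∀ K ∈ holes A, c + e ∉ K := by
  have hne : (A.filter (lineIndex e · = t)).Nonempty := by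
    obtain ⟨c, hc, rfl⟩ := mem_image.1 ht
    exact ⟨c, mem_filter.2 ⟨hc, rfl⟩⟩
  obtain ⟨c, hc, hmax⟩ := exists_max_image _ (dot e) hne
  rw [mem_filter] at hc
  have hray : ∀ k : ℕ, c + e + (k : ℤ) • e ∉ A := by
    intro k hk
    have hshift : c + e + (k : ℤ) • e = c + ((k : ℤ) + 1) • e := by
      rw [add_smul, one_smul]; abel
    rw [hshift] at hk
    have := hmax _ (mem_filter.2 ⟨hk, by rw [lineIndex_add_smul he, hc.2]⟩)
    rw [dot_add_smul, dot_self he] at this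
    omega
  refine ⟨c, ?_, hc.2, fun K hK => notMem_holes_of_forall_add_smul_notMem hK he hray⟩
  simpa [boundaryEdges, hc.1, he] using hray 0

theorem card_nbrs_zero : #(nbrs (0 : Cell)) = 4 := by decide

theorem four_mul_card_add_sum_card_image_lineIndex_le_perim (A : Finset Cell)
    (HF : Finset (Set Cell)) (hHF : ↑HF ⊆ holes A) :
    4 * #HF + ∑ e ∈ nbrs 0, #(A.image (lineIndex e)) ≤ perim A := by
  let Edge : (Set Cell × Cell) ⊕ (Σ _ : Cell, ℤ) → Cell × Cell → Prop
    | .inl (K, e), p => p.2 = e ∧ p.1 + p.2 ∈ K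
    | .inr ⟨e, t⟩, p => p.2 = e ∧ lineIndex e p.1 = t ∧ ∀ K ∈ holes A, p.1 + p.2 ∉ K
  have hcard : #((HF ×ˢ nbrs 0).disjSum ((nbrs 0).sigma fun e => A.image (lineIndex e))) =
      4 * #HF + ∑ e ∈ nbrs 0, #(A.image (lineIndex e)) := by
    rw [card_disjSum, card_product, card_sigma, card_nbrs_zero, mul_comm]
  rw [perim_eq_card_boundaryEdges, ← hcard]
  refine card_le_card_of_forall_subsingleton Edge ?_ ?_
  · rintro (⟨K, e⟩ | ⟨e, t⟩) hi
    · rw [inl_mem_disjSum, mem_product] at hi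
      obtain ⟨c, hc, hcK⟩ := exists_boundaryEdge_into_hole (hHF hi.1) hi.2
      exact ⟨(c, e), hc, rfl, hcK⟩
    · rw [inr_mem_disjSum, mem_sigma] at hi
      obtain ⟨c, hc, hct, hfree⟩ := exists_boundaryEdge_escaping hi.1 hi.2
      exact ⟨(c, e), hc, rfl, hct, hfree⟩
  · rintro ⟨c, e⟩ - (⟨K, e₁⟩ | ⟨e₁, t₁⟩) ⟨hi, hE⟩ (⟨K', e₂⟩ | ⟨e₂, t₂⟩) ⟨hi', hE'⟩
    · rw [inl_mem_disjSum, mem_product] at hi hi'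
      obtain ⟨rfl, hK⟩ := hE
      obtain ⟨rfl, hK'⟩ := hE'
      obtain rfl := eq_of_mem_holes (hHF hi.1) (hHF hi'.1) hK hK'
      rfl
    · rw [inl_mem_disjSum, mem_product] at hi
      exact absurd hE.2 (hE'.2.2 K (hHF hi.1))
    · rw [inl_mem_disjSum, mem_product] at hi'
      exact absurd hE'.2 (hE.2.2 K' (hHF hi'.1))
    · obtain ⟨rfl, rfl, -⟩ := hE
      obtain ⟨rfl, rfl, -⟩ := hE'
      rfl

theorem sum_card_image_lineIndex (A : Finset Cell) :
    ∑ e ∈ nbrs 0, #(A.image (lineIndex e)) =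
      2 * (#(A.image Prod.fst) + #(A.image Prod.snd)) := by
  simp [nbrs, lineIndex, two_mul, add_assoc, add_left_comm, add_comm]

end Polyomino

theorem PolyConnected.ordConnected_image {A : Finset Cell} (hA : PolyConnected A)
    {f : Cell → ℤ} (hf : ∀ x y, adjacent x y → f y ≤ f x + 1) :
    (↑(A.image f) : Set ℤ).OrdConnected := by
  refine ⟨?_⟩
  rintro _ hx _ hy z ⟨hxz, hzy⟩
  obtain ⟨a, ha, rfl⟩ := mem_image.1 hx
  obtain ⟨b, hb, rfl⟩ := mem_image.1 hy
  clear hx hy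
  suffices ∃ c ∈ A, f c = z from mem_image.2 this
  induction hA.2 a ha b hb with
  | refl => exact ⟨a, ha, by omega⟩
  | @tail w v _ hwv ih =>
    by_cases hzw : z ≤ f w
    · exact ih hwv.1 hzw
    · exact ⟨v, hwv.2.1, by have := hf w v hwv.2.2; omega⟩

theorem PolyConnected.polyWidth_eq {A : Finset Cell} (hA : PolyConnected A) :
    polyWidth A = #(A.image Prod.fst) := by
  refine (natCast_card_eq_unbotD_max_sub_untopD_min_add_one (hA.1.image _)
    (hA.ordConnected_image fun x y h => ?_)).symm
  rw [adjacent] at h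
  linarith [neg_le_abs (x.1 - y.1), abs_nonneg (x.2 - y.2)]

theorem PolyConnected.polyHeight_eq {A : Finset Cell} (hA : PolyConnected A) :
    polyHeight A = #(A.image Prod.snd) := by
  refine (natCast_card_eq_unbotD_max_sub_untopD_min_add_one (hA.1.image _)
    (hA.ordConnected_image fun x y h => ?_)).symm
  rw [adjacent] at h
  linarith [neg_le_abs (x.2 - y.2), abs_nonneg (x.1 - y.1)]

/-- for every connected polyomino, P(c) ≥ 2[ℓ1(c)+ℓ2(c)] + 4Q(c). -/
theorem perimeter_lower_bound (A : Finset Cell) (hconn : PolyConnected A) :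
    2 * (polyWidth A + polyHeight A) + 4 * (numHoles A : ℤ) ≤ (perim A : ℤ) := by
  obtain ⟨HF, hHF, hcard⟩ := Set.exists_finset_subset_card_eq_ncard (Polyomino.holes A)
  have key := Polyomino.four_mul_card_add_sum_card_image_lineIndex_le_perim A HF hHF
  rw [Polyomino.sum_card_image_lineIndex, hcard, ← Polyomino.numHoles_eq_ncard_holes] at key
  rw [hconn.polyWidth_eq, hconn.polyHeight_eq]
  exact_mod_cast (add_comm _ _).trans_le key
end

section
/- For every n₂ ≤ L², within the set V*,n₂^{4n₂} of tb-tiled configurations with n₂ particles of type 2, the standard configurations achieve the minimal energy: every standard configuration η in V*,n₂^{4n₂} satisfies H(η) = min over ξ ∈ V*,n₂^{4n₂} of H(ξ). -/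
/-! In a tb-tiled configuration every particle of type 2 is surrounded by four particles of
type 1 and every particle of type 1 touches one of type 2, so `H = (Δ2 - 4U) n₂ + Δ1 n₁`, where
`n₁` is the number of sites adjacent to the particles of type 2; minimising `H` means minimising
`n₁`. In dual coordinates the neighbours of the type-2 particles of one parity are exactly the
vertices of their tile support, so `n₁` counts the vertices of at most two polyominoes with `n₂`
cells in total. A polyomino with `k` cells has at least `k + r + m + 1` vertices for some
`r × m` rectangle with `r m ≥ k`: sweep its rows up to a longest one by their lower vertices and
the others by their upper ones. By AM-GM, `r + m` is then at least the semiperimeter of a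
standard polyomino with `k` cells, whose vertex count attains the bound. -/

open Finset

lemma mem_nbrs {x y : Site} : y ∈ nbrs x ↔ adjacent x y := by
  obtain ⟨a, b⟩ := x; obtain ⟨c, d⟩ := y
  simp only [nbrs, adjacent, mem_insert, mem_singleton, Prod.mk.injEq]
  rcases abs_cases (a - c) with ⟨h1, _⟩ | ⟨h1, _⟩ <;>
    rcases abs_cases (b - d) with ⟨h2, _⟩ | ⟨h2, _⟩ <;> omega

lemma mem_nbrs_comm {x y : Site} : y ∈ nbrs x ↔ x ∈ nbrs y := by
  simp only [mem_nbrs, adjacent, abs_sub_comm x.1 y.1, abs_sub_comm x.2 y.2]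

lemma card_nbrs (x : Site) : #(nbrs x) = 4 := by
  rw [nbrs, card_insert_of_notMem, card_insert_of_notMem, card_insert_of_notMem,
    card_singleton] <;> simp [Prod.ext_iff] <;> omega

lemma parity_of_mem_nbrs {x y : Site} (h : y ∈ nbrs x) :
    (y.1 + y.2) % 2 = ((x.1 + x.2) % 2 + 1) % 2 := by
  simp only [nbrs, mem_insert, mem_singleton] at h
  rcases h with rfl | rfl | rfl | rfl <;> omega

lemma cellOf_injOn_parity (p : ℤ) : Set.InjOn cellOf {x : Site | (x.1 + x.2) % 2 = p} := by
  intro x hx y hy h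
  simp only [cellOf, Prod.mk.injEq, Int.fdiv_eq_ediv_of_nonneg _ zero_le_two] at h
  have hx : (x.1 + x.2) % 2 = p := hx
  have hy : (y.1 + y.2) % 2 = p := hy
  ext <;> omega

def cellCorners (c : Cell) : Finset Cell :=
  {c, (c.1 + 1, c.2), (c.1, c.2 + 1), (c.1 + 1, c.2 + 1)}

lemma vertexSet_eq_biUnion (A : Finset Cell) : vertexSet A = A.biUnion cellCorners := rfl

def dualCorner (x : Site) : Cell := cellOf (x.1 - 1, x.2)

lemma image_cellOf_nbrs (x : Site) : (nbrs x).image cellOf = cellCorners (dualCorner x) := by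
  ext c
  simp only [nbrs, dualCorner, cellCorners, cellOf, image_insert, image_singleton,
    mem_insert, mem_singleton, Prod.ext_iff, Int.fdiv_eq_ediv_of_nonneg _ zero_le_two]
  omega

def RectBound (k N : ℕ) : Prop := ∃ r m : ℕ, k ≤ r * m ∧ k + r + m + 1 ≤ N

lemma card_filter_le_add_card_filter_ge {α : Type*} [DecidableEq α] (s : Finset α) (f : α → ℤ)
    (t : ℤ) :
    #{a ∈ s | f a ≤ t} + #{a ∈ s | t ≤ f a} = #s + #{a ∈ s | f a = t} := by
  rw [← card_union_add_card_inter, ← filter_or, ← filter_and,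
    filter_true_of_mem fun a _ => le_total (f a) t]
  congr 2
  exact filter_congr fun a _ => le_antisymm_iff.symm

lemma card_add_card_image_snd_le (B : Finset Cell) :
    #B + #(B.image Prod.snd) ≤ #(B ∪ B.image fun c => (c.1 + 1, c.2)) := by
  set H := B ∪ B.image fun c => (c.1 + 1, c.2)
  have hrows : ∀ c ∈ H, c.2 ∈ B.image Prod.snd := by
    intro c hc
    rcases mem_union.1 hc with h | h
    · exact mem_image_of_mem _ h
    · obtain ⟨d, hd, rfl⟩ := mem_image.1 h
      exact mem_image.2 ⟨d, hd, rfl⟩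
  rw [card_eq_sum_card_fiberwise (fun c hc => mem_image_of_mem Prod.snd hc),
    card_eq_sum_card_fiberwise hrows, card_eq_sum_ones (B.image Prod.snd), ← sum_add_distrib]
  refine sum_le_sum fun t ht => ?_
  have hne : {d ∈ B | d.2 = t}.Nonempty := by
    obtain ⟨d, hd, rfl⟩ := mem_image.1 ht
    exact ⟨d, mem_filter.2 ⟨hd, rfl⟩⟩
  -- the cell east of the easternmost cell of row `t` is new
  obtain ⟨c, hc, hmax⟩ := exists_max_image _ Prod.fst hne
  have hnew : (c.1 + 1, c.2) ∉ {d ∈ B | d.2 = t} := fun h => by simpa using hmax _ h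
  rw [← card_insert_of_notMem hnew]
  refine card_le_card (insert_subset ?_ (filter_subset_filter _ subset_union_left))
  rw [mem_filter] at hc ⊢
  exact ⟨mem_union_right _ (mem_image_of_mem _ hc.1), hc.2⟩

theorem rectBound_card_vertexSet {A : Finset Cell} (hA : A.Nonempty) :
    RectBound #A #(vertexSet A) := by
  set R := A.image Prod.snd
  obtain ⟨t, ht, hmax⟩ := exists_max_image R (fun s => #{c ∈ A | c.2 = s}) (hA.image _)
  refine ⟨#R, #{c ∈ A | c.2 = t}, ?_, ?_⟩
  · calc #A = ∑ s ∈ R, #{c ∈ A | c.2 = s} :=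
          card_eq_sum_card_fiberwise fun c hc => mem_image_of_mem _ hc
      _ ≤ ∑ _s ∈ R, #{c ∈ A | c.2 = t} := sum_le_sum hmax
      _ = #R * #{c ∈ A | c.2 = t} := by rw [sum_const, smul_eq_mul]
  -- rows up to the longest one contribute their lower vertices, the others their upper ones
  set lo := {c ∈ A | c.2 ≤ t}
  set hi := {c ∈ A | t ≤ c.2}
  set east : Cell → Cell := fun c => (c.1 + 1, c.2)
  set north : Cell → Cell := fun c => (c.1, c.2 + 1)
  have hsub : (lo ∪ lo.image east) ∪ (hi ∪ hi.image east).image north ⊆ vertexSet A := by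
    intro v hv
    simp only [vertexSet_eq_biUnion, mem_biUnion, cellCorners, mem_union, mem_image,
      mem_insert, mem_singleton, lo, hi, mem_filter, east, north] at hv ⊢
    grind
  have hdisj : Disjoint (lo ∪ lo.image east) ((hi ∪ hi.image east).image north) := by
    simp only [disjoint_left, mem_union, mem_image, lo, hi, mem_filter, east, north]
    grind
  have hrows : #(lo.image Prod.snd) + #(hi.image Prod.snd) = #R + 1 := by
    have hlo : lo.image Prod.snd = {s ∈ R | s ≤ t} := by rw [filter_image]
    have hhi : hi.image Prod.snd = {s ∈ R | t ≤ s} := by rw [filter_image]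
    rw [hlo, hhi]
    simpa [filter_eq', ht] using card_filter_le_add_card_filter_ge R id t
  have hcells : #lo + #hi = #A + #{c ∈ A | c.2 = t} :=
    card_filter_le_add_card_filter_ge A Prod.snd t
  calc #A + #R + #{c ∈ A | c.2 = t} + 1
      = (#lo + #(lo.image Prod.snd)) + (#hi + #(hi.image Prod.snd)) := by omega
    _ ≤ #(lo ∪ lo.image east) + #(hi ∪ hi.image east) :=
        add_le_add (card_add_card_image_snd_le lo) (card_add_card_image_snd_le hi)
    _ = #((lo ∪ lo.image east) ∪ (hi ∪ hi.image east).image north) := by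
        rw [card_union_of_disjoint hdisj, card_image_of_injective _ fun c d h => by
          simpa [north, Prod.ext_iff] using h]
    _ ≤ #(vertexSet A) := card_le_card hsub

lemma RectBound.add {k k' N N' : ℕ} (h : RectBound k N) (h' : RectBound k' N') :
    RectBound (k + k') (N + N') := by
  obtain ⟨r, m, hk, hN⟩ := h
  obtain ⟨r', m', hk', hN'⟩ := h'
  refine ⟨r + r', max m m', ?_, by omega⟩
  calc k + k' ≤ r * m + r' * m' := add_le_add hk hk'
    _ ≤ r * max m m' + r' * max m m' :=
        add_le_add (Nat.mul_le_mul_left _ (le_max_left _ _))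
          (Nat.mul_le_mul_left _ (le_max_right _ _))
    _ = (r + r') * max m m' := (add_mul _ _ _).symm

def stdSemiperimeter (l ζ k : ℕ) : ℕ := 2 * l + ζ + if k = 0 then 0 else 1

lemma RectBound.stdSemiperimeter_le {l ζ k N : ℕ} (h : RectBound (l * (l + ζ) + k) N)
    (hl : 1 ≤ l) (hζ : ζ ≤ 1) : l * (l + ζ) + k + stdSemiperimeter l ζ k + 1 ≤ N := by
  obtain ⟨r, m, hk, hN⟩ := h
  suffices stdSemiperimeter l ζ k ≤ r + m by omega
  by_contra! hlt
  have hamgm : 4 * (r * m) ≤ (r + m) * (r + m) := by nlinarith [sq_nonneg ((r : ℤ) - m)]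
  unfold stdSemiperimeter at hlt
  split_ifs at hlt with hk0
  · interval_cases ζ <;> nlinarith
  · have : 1 ≤ k := Nat.one_le_iff_ne_zero.2 hk0
    interval_cases ζ <;> nlinarith

lemma card_baseStd (l ζ a k : ℕ) : #(baseStd l ζ a k) = l * (l + ζ) + k := by
  rw [baseStd, card_union_of_disjoint, card_image_of_injective, card_image_of_injective,
    card_product, card_range, card_range, card_range, mul_comm]
  · intro i j h
    simp only [Prod.mk.injEq] at h
    omega
  · intro p q h
    simp only [Prod.mk.injEq, Nat.cast_inj] at h
    exact Prod.ext h.1 h.2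
  · simp only [disjoint_left, mem_image, mem_product, mem_range]
    rintro _ ⟨q, hq, rfl⟩ ⟨i, -, h⟩
    simp only [Prod.mk.injEq] at h
    omega

lemma card_vertexSet_baseStd_le {l ζ a k : ℕ} (hak : a + k ≤ l + ζ) :
    #(vertexSet (baseStd l ζ a k)) ≤ #(baseStd l ζ a k) + stdSemiperimeter l ζ k + 1 := by
  set G : Finset Cell := Icc 0 ((l + ζ : ℕ) : ℤ) ×ˢ Icc 0 (l : ℤ)
  set T : Finset Cell := if k = 0 then ∅ else Icc (a : ℤ) (a + k) ×ˢ {(l : ℤ) + 1}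
  have hG : #G = (l + ζ + 1) * (l + 1) := by simp [G]; omega
  have hT : #T = if k = 0 then 0 else k + 1 := by split_ifs <;> simp [T, *]; omega
  have hsub : vertexSet (baseStd l ζ a k) ⊆ G ∪ T := by
    intro v hv
    obtain ⟨c, hc, hv⟩ := mem_biUnion.1 hv
    simp only [mem_insert, mem_singleton] at hv
    rcases mem_union.1 hc with hc | hc
    · obtain ⟨⟨i, j⟩, hij, rfl⟩ := mem_image.1 hc
      simp only [mem_product, mem_range] at hij
      rcases hv with rfl | rfl | rfl | rfl <;> simp [G] <;> omega
    · obtain ⟨i, hi, rfl⟩ := mem_image.1 hc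
      have hk : k ≠ 0 := by simp only [mem_range] at hi; omega
      simp only [mem_range] at hi
      rcases hv with rfl | rfl | rfl | rfl <;> simp [G, T, hk] <;> omega
  have := (card_le_card hsub).trans (card_union_le G T)
  rw [hG, hT] at this
  rw [card_baseStd, stdSemiperimeter]
  split_ifs at this ⊢ <;> nlinarith

lemma card_vertexSet_image_le (A : Finset Cell) {φ g : Cell → Cell}
    (h : ∀ c, cellCorners (φ c) ⊆ (cellCorners c).image g) :
    #(vertexSet (A.image φ)) ≤ #(vertexSet A) := by
  calc #(vertexSet (A.image φ)) ≤ #((vertexSet A).image g) := by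
        refine card_le_card ?_
        rw [vertexSet_eq_biUnion, vertexSet_eq_biUnion, image_biUnion, biUnion_image]
        exact biUnion_mono fun c _ => h c
    _ ≤ #(vertexSet A) := card_image_le

/-- A symmetry of the lattice maps the corners of `c` onto the corners of the image cell, up
to shifting by one the coordinates it reverses. -/
lemma card_vertexSet_image_dihedral_le (A : Finset Cell) {f : Cell → Cell}
    (hf : f ∈ dihedralMaps) (t : Cell) :
    #(vertexSet (A.image fun c => f c + t)) ≤ #(vertexSet A) := by
  refine card_vertexSet_image_le A (g := fun v =>
    f v + t + ((1 - (f (1, 1)).1) / 2, (1 - (f (1, 1)).2) / 2)) fun c => ?_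
  simp only [dihedralMaps, List.mem_cons, List.not_mem_nil, or_false] at hf
  rcases hf with rfl | rfl | rfl | rfl | rfl | rfl | rfl | rfl <;>
    intro v <;> simp [cellCorners, Prod.ext_iff] <;> omega

lemma injective_dihedral_add {f : Cell → Cell} (hf : f ∈ dihedralMaps) (t : Cell) :
    Function.Injective fun c => f c + t := by
  simp only [dihedralMaps, List.mem_cons, List.not_mem_nil, or_false] at hf
  rcases hf with rfl | rfl | rfl | rfl | rfl | rfl | rfl | rfl <;>
    intro c d h <;> simp only [Prod.ext_iff, Prod.fst_add, Prod.snd_add] at h ⊢ <;> omega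

lemma image_cellOf_biUnion_nbrs (S : Finset Site) :
    (S.biUnion nbrs).image cellOf = vertexSet (S.image dualCorner) := by
  rw [biUnion_image, vertexSet_eq_biUnion, image_biUnion]
  exact biUnion_congr rfl fun x _ => image_cellOf_nbrs x

lemma dualCorner_eq (x : Site) :
    dualCorner x = cellOf x + if (x.1 + x.2) % 2 = 0 then (-1, -1) else 0 := by
  simp only [dualCorner, cellOf, Int.fdiv_eq_ediv_of_nonneg _ zero_le_two]
  split_ifs <;> ext <;> simp <;> omega

section SameParity

variable {S : Finset Site} {p : ℤ}

lemma card_biUnion_nbrs_of_parity (hS : ∀ x ∈ S, (x.1 + x.2) % 2 = p) :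
    #(S.biUnion nbrs) = #(vertexSet (S.image dualCorner)) := by
  rw [← image_cellOf_biUnion_nbrs, card_image_of_injOn]
  refine (cellOf_injOn_parity ((p + 1) % 2)).mono fun y hy => ?_
  obtain ⟨x, hx, hy⟩ := mem_biUnion.1 hy
  change (y.1 + y.2) % 2 = (p + 1) % 2
  rw [parity_of_mem_nbrs hy, hS x hx]

lemma card_image_dualCorner_of_parity (hS : ∀ x ∈ S, (x.1 + x.2) % 2 = p) :
    #(S.image dualCorner) = #S := by
  refine card_image_of_injOn fun x hx y hy h => ?_
  have hxy := cellOf_injOn_parity ((p + 1) % 2) (by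
    change (x.1 - 1 + x.2) % 2 = _; have := hS x hx; omega) (by
    change (y.1 - 1 + y.2) % 2 = _; have := hS y hy; omega) h
  simp only [Prod.mk.injEq, sub_left_inj] at hxy
  exact Prod.ext hxy.1 hxy.2

lemma image_dualCorner_of_parity (hS : ∀ x ∈ S, (x.1 + x.2) % 2 = p) :
    S.image dualCorner = (S.image cellOf).image (· + if p = 0 then (-1, -1) else 0) := by
  rw [image_image]
  exact image_congr fun x hx => by simp only [dualCorner_eq, hS x hx, Function.comp_apply]

lemma rectBound_card_biUnion_nbrs_of_parity (hS : ∀ x ∈ S, (x.1 + x.2) % 2 = p)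
    (hne : S.Nonempty) :
    RectBound #S #(S.biUnion nbrs) := by
  rw [card_biUnion_nbrs_of_parity hS, ← card_image_dualCorner_of_parity hS]
  exact rectBound_card_vertexSet (hne.image _)

end SameParity

theorem rectBound_card_biUnion_nbrs {S : Finset Site} (hne : S.Nonempty) :
    RectBound #S #(S.biUnion nbrs) := by
  set S₀ := {x ∈ S | (x.1 + x.2) % 2 = 0}
  set S₁ := {x ∈ S | ¬(x.1 + x.2) % 2 = 0}
  have h₀ : ∀ x ∈ S₀, (x.1 + x.2) % 2 = 0 := fun x hx => (mem_filter.1 hx).2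
  have h₁ : ∀ x ∈ S₁, (x.1 + x.2) % 2 = 1 := fun x hx => by
    have := (mem_filter.1 hx).2; omega
  have hunion : S₀ ∪ S₁ = S := filter_union_filter_not_eq _ S
  rcases S₀.eq_empty_or_nonempty with he₀ | hne₀
  · rw [← hunion, he₀, empty_union] at hne ⊢
    exact rectBound_card_biUnion_nbrs_of_parity h₁ hne
  rcases S₁.eq_empty_or_nonempty with he₁ | hne₁
  · rw [← hunion, he₁, union_empty]
    exact rectBound_card_biUnion_nbrs_of_parity h₀ hne₀
  have hdisj : Disjoint (S₀.biUnion nbrs) (S₁.biUnion nbrs) := by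
    simp only [disjoint_left, mem_biUnion]
    rintro z ⟨x, hx, hzx⟩ ⟨y, hy, hzy⟩
    have := parity_of_mem_nbrs hzx
    have := parity_of_mem_nbrs hzy
    have := h₀ x hx
    have := h₁ y hy
    omega
  rw [← hunion, union_biUnion, card_union_of_disjoint hdisj,
    card_union_of_disjoint (disjoint_filter_filter_not S S _)]
  exact (rectBound_card_biUnion_nbrs_of_parity h₀ hne₀).add
    (rectBound_card_biUnion_nbrs_of_parity h₁ hne₁)

section Configurations

variable {Λ : Finset Site} {k : ℕ} {ξ : Config Λ}

lemma mem_of_val_ne_zero (η : Config Λ) {x : Site} (h : η.val x ≠ 0) : x ∈ Λ :=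
  not_imp_comm.1 (η.zero_outside x) h

lemma numBonds_le_sum (η : Config Λ) :
    numBonds η ≤ ∑ y ∈ type2Sites η, #{z ∈ nbrs y | η.val z = 1} := by
  rw [numBonds, card_eq_sum_card_fiberwise (f := Prod.snd) (t := type2Sites η) fun q hq => by
    simp only [mem_coe, mem_filter, mem_product] at hq
    exact mem_filter.2 ⟨(sdiff_subset hq.1.2), hq.2.2.2⟩]
  refine sum_le_sum fun y _ =>
    card_le_card_of_injOn Prod.fst (fun q hq => ?_) fun q hq r hr h => ?_
  · simp only [mem_coe, mem_filter, mem_product] at hq ⊢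
    rw [mem_nbrs_comm, mem_nbrs, ← hq.2]
    exact ⟨hq.1.2.1, hq.1.2.2.1⟩
  · simp only [mem_coe, mem_filter] at hq hr
    exact Prod.ext h (hq.2.trans hr.2.symm)

/-- Each particle of type 2 carries at most four bonds, so `4k` bonds saturate all `k` of them. -/
lemma val_eq_one_of_mem_nbrs (hξ : ξ ∈ VTiled Λ k) {y z : Site} (hy : ξ.val y = 2)
    (hz : z ∈ nbrs y) : ξ.val z = 1 := by
  obtain ⟨⟨hcard, -⟩, hbonds, -⟩ := hξ
  have hle : ∀ y ∈ type2Sites ξ, #{z ∈ nbrs y | ξ.val z = 1} ≤ 4 := fun y _ =>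
    (card_filter_le _ _).trans (card_nbrs y).le
  have hsum : ∑ y ∈ type2Sites ξ, #{z ∈ nbrs y | ξ.val z = 1} = ∑ _y ∈ type2Sites ξ, 4 := by
    refine le_antisymm (sum_le_sum hle) ?_
    rw [sum_const, smul_eq_mul, mul_comm]
    exact (hcard ▸ hbonds ▸ numBonds_le_sum ξ :)
  have hy' : y ∈ type2Sites ξ := mem_filter.2 ⟨mem_of_val_ne_zero ξ (by simp [hy]), hy⟩
  have hfull := (sum_eq_sum_iff_of_le hle).1 hsum y hy'
  rw [← card_nbrs y, card_filter_eq_iff] at hfull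
  exact hfull z hz

lemma numType1_eq_card_biUnion_nbrs (hξ : ξ ∈ VTiled Λ k) :
    numType1 ξ = #((type2Sites ξ).biUnion nbrs) := by
  rw [numType1]
  congr 1
  ext x
  simp only [mem_filter, mem_biUnion, type2Sites]
  constructor
  · rintro ⟨-, hx⟩
    obtain ⟨y, hy, hy2⟩ := hξ.2.2 x hx
    exact ⟨y, ⟨mem_of_val_ne_zero ξ (by simp [hy2]), hy2⟩, mem_nbrs_comm.1 hy⟩
  · rintro ⟨y, ⟨-, hy⟩, hx⟩
    have hx1 := val_eq_one_of_mem_nbrs hξ hy hx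
    exact ⟨mem_of_val_ne_zero ξ (by simp [hx1]), hx1⟩

lemma energy_eq_of_mem_VTiled (U Δ1 Δ2 : ℝ) (hξ : ξ ∈ VTiled Λ k) :
    energy U Δ1 Δ2 ξ = (Δ2 - 4 * U) * k + Δ1 * numType1 ξ := by
  rw [energy, hξ.2.1, hξ.1.1]
  push_cast
  ring

theorem card_biUnion_nbrs_le_of_isStandardConfig {η : Config Λ} (h : IsStandardConfig η) :
    ∃ l ζ b : ℕ, 1 ≤ l ∧ ζ ≤ 1 ∧ #(type2Sites η) = l * (l + ζ) + b ∧
      #((type2Sites η).biUnion nbrs) ≤ #(type2Sites η) + stdSemiperimeter l ζ b + 1 := by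
  obtain ⟨hpar, l, ζ, a, k, hl, hζ, hak, f, hf, t, hA⟩ := h
  replace hA : tileSupport η = (baseStd l ζ a k).image fun c => f c + t := hA
  have htile : #(tileSupport η) = l * (l + ζ) + k := by
    rw [hA, card_image_of_injective _ (injective_dihedral_add hf t), card_baseStd]
  obtain ⟨x₀, hx₀⟩ : (type2Sites η).Nonempty := by
    rw [← image_nonempty (f := cellOf), ← card_pos]
    change 0 < #(tileSupport η)
    rw [htile]
    positivity
  have hS : ∀ x ∈ type2Sites η, (x.1 + x.2) % 2 = (x₀.1 + x₀.2) % 2 := fun x hx =>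
    hpar x x₀ (mem_filter.1 hx).2 (mem_filter.1 hx₀).2
  have hcard : #(type2Sites η) = l * (l + ζ) + k := by
    rw [← htile, tileSupport, card_image_of_injOn ((cellOf_injOn_parity _).mono hS)]
  refine ⟨l, ζ, k, hl, hζ, hcard, ?_⟩
  rw [card_biUnion_nbrs_of_parity hS, image_dualCorner_of_parity hS, ← tileSupport, hA,
    image_image, hcard, ← card_baseStd l ζ a k]
  simp only [Function.comp_def, add_assoc]
  exact (card_vertexSet_image_dihedral_le _ hf _).trans (card_vertexSet_baseStd_le hak)

theorem numType1_le_of_isStandardConfig {η : Config Λ} (hη : η ∈ VTiled Λ k)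
    (hstd : IsStandardConfig η) (hξ : ξ ∈ VTiled Λ k) : numType1 η ≤ numType1 ξ := by
  obtain ⟨l, ζ, b, hl, hζ, hcard, hle⟩ := card_biUnion_nbrs_le_of_isStandardConfig hstd
  have hcard' : #(type2Sites ξ) = l * (l + ζ) + b := hξ.1.1.trans (hη.1.1.symm.trans hcard)
  have hbound := rectBound_card_biUnion_nbrs (card_pos.1 (by rw [hcard']; positivity))
  rw [hcard'] at hbound
  rw [numType1_eq_card_biUnion_nbrs hη, numType1_eq_card_biUnion_nbrs hξ]
  calc #((type2Sites η).biUnion nbrs)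
      ≤ l * (l + ζ) + b + stdSemiperimeter l ζ b + 1 := hcard ▸ hle
    _ ≤ #((type2Sites ξ).biUnion nbrs) := hbound.stdSemiperimeter_le hl hζ

end Configurations

theorem standard_configurations_minimize_energy_general
    (U Δ1 Δ2 : ℝ) (hΔ1 : 0 < Δ1)
    (L : ℕ) (k : ℕ)
    (η : Config (latBox L)) (hη : η ∈ VTiled (latBox L) k) (hstd : IsStandardConfig η) :
    ∀ ξ ∈ VTiled (latBox L) k, energy U Δ1 Δ2 η ≤ energy U Δ1 Δ2 ξ := by
  intro ξ hξ
  rw [energy_eq_of_mem_VTiled U Δ1 Δ2 hη, energy_eq_of_mem_VTiled U Δ1 Δ2 hξ]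
  gcongr
  exact numType1_le_of_isStandardConfig hη hstd hξ

/-- within V_{*,n₂}^{4n₂}, the standard configurations achieve the minimal
energy. -/
theorem standard_configurations_minimize_energy
    (U Δ1 Δ2 : ℝ) (hU : 0 < U) (hΔ1 : 0 < Δ1) (hΔ1U : Δ1 < U)
    (hgap : 2 * U < Δ2 - Δ1) (hsum : Δ1 + Δ2 < 4 * U)
    (L : ℕ) (hL : 2 * lstar U Δ1 Δ2 < (L : ℤ))
    (k : ℕ) (hk : k ≤ L ^ 2)
    (η : Config (latBox L)) (hη : η ∈ VTiled (latBox L) k) (hstd : IsStandardConfig η) :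
    ∀ ξ ∈ VTiled (latBox L) k, energy U Δ1 Δ2 η ≤ energy U Δ1 Δ2 ξ :=
  standard_configurations_minimize_energy_general U Δ1 Δ2 hΔ1 L k η hη hstd
end
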